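/- arXiv:2410.17939 — 8 statements merged into one kernel-verified Lean document; each statement's English description precedes it below -/
import Mathlib

section
/- For integers n ≥ 1 and m ≥ 0 and real Y ≥ 1, the integral of (log(Y/(x₁⋯xₙ)))^m · dx₁⋯dxₙ/(x₁⋯xₙ) over the region {x₁,…,xₙ ≥ 1 : x₁⋯xₙ ≤ Y} equals (m!/(m+n)!)·(log Y)^{m+n}. -/
/-!
Peel off the first coordinate, `x = (t, y)`. The slice of the region at height `t` is empty unless
`1 ≤ t ≤ Y`, in which case it is the same region for `Y / t` in one dimension fewer, and the
integrand becomes the integrand for `Y / t` divided by `t`. By induction the inner integral is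
`m! / (m + n)! * log (Y / t) ^ (m + n) / t`, and
`∫₁^Y log (Y / t) ^ k dt / t = log Y ^ (k + 1) / (k + 1)` since `-log (Y / t) ^ (k + 1) / (k + 1)`
is an antiderivative.
-/

open MeasureTheory Real

theorem integral_eq_integral_integral_fin_cons {n : ℕ} {α : Type*} [MeasurableSpace α]
    {μ : Measure α} [SigmaFinite μ] {E : Type*} [NormedAddCommGroup E] [NormedSpace ℝ E]
    {f : (Fin (n + 1) → α) → E} (hf : Integrable f (Measure.pi fun _ ↦ μ)) :
    ∫ x, f x ∂Measure.pi (fun _ ↦ μ) = ∫ t, ∫ y, f (Fin.cons t y) ∂Measure.pi (fun _ ↦ μ) ∂μ := by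
  have e := (measurePreserving_piFinSuccAbove (fun _ : Fin (n + 1) ↦ μ) 0).symm
  rw [← e.integral_comp', integral_prod]
  · simp [MeasurableEquiv.piFinSuccAbove_symm_apply, Fin.insertNthEquiv, Fin.insertNth_zero']
  · exact (e.integrable_comp_emb (MeasurableEquiv.measurableEmbedding _)).2 hf

noncomputable def logPowDiv (m : ℕ) (Y p : ℝ) : ℝ := log (Y / p) ^ m / p

lemma logPowDiv_mul (m : ℕ) (Y t p : ℝ) : logPowDiv m Y (t * p) = logPowDiv m (Y / t) p / t := by
  rw [logPowDiv, logPowDiv, div_div, div_div, mul_comm p]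

theorem intervalIntegral_logPowDiv (k : ℕ) {Y : ℝ} (hY : 0 < Y) :
    ∫ t in (1 : ℝ)..Y, logPowDiv k Y t = log Y ^ (k + 1) / (k + 1) := by
  have hpos : ∀ t ∈ Set.uIcc 1 Y, 0 < t := fun t ht ↦ (lt_min one_pos hY).trans_le ht.1
  have hderiv : ∀ t ∈ Set.uIcc 1 Y,
      HasDerivAt (fun t ↦ -(log Y - log t) ^ (k + 1) / (k + 1)) (logPowDiv k Y t) t := by
    intro t ht
    refine ((((hasDerivAt_log (hpos t ht).ne').const_sub (log Y)).pow (k + 1)).neg.div_const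
      ((k : ℝ) + 1)).congr_deriv ?_
    rw [logPowDiv, log_div hY.ne' (hpos t ht).ne']
    field_simp
    simp
  have hcont : ContinuousOn (logPowDiv k Y) (Set.uIcc 1 Y) := fun t ht ↦
    ((continuousAt_const.div continuousAt_id (hpos t ht).ne').log
      (div_pos hY (hpos t ht)).ne' |>.pow k |>.div continuousAt_id
      (hpos t ht).ne').continuousWithinAt
  rw [intervalIntegral.integral_eq_sub_of_hasDerivAt hderiv hcont.intervalIntegrable]
  simp [neg_div]

def productRegion (n : ℕ) (Y : ℝ) : Set (Fin n → ℝ) := {x | (∀ i, 1 ≤ x i) ∧ ∏ i, x i ≤ Y}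

section productRegion

variable {n : ℕ} {Y : ℝ}

lemma one_le_prod_of_mem_productRegion {x : Fin n → ℝ} (hx : x ∈ productRegion n Y) :
    1 ≤ ∏ i, x i :=
  Finset.one_le_prod fun i _ ↦ hx.1 i

lemma le_of_mem_productRegion {x : Fin n → ℝ} (hx : x ∈ productRegion n Y) (i : Fin n) :
    x i ≤ Y := by
  refine le_trans ?_ hx.2
  rw [← Finset.mul_prod_erase _ _ (Finset.mem_univ i)]
  exact le_mul_of_one_le_right (zero_le_one.trans (hx.1 i)) (Finset.one_le_prod fun j _ ↦ hx.1 j)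

lemma productRegion_zero (hY : 1 ≤ Y) : productRegion 0 Y = Set.univ := by
  simp [productRegion, hY]

lemma cons_mem_productRegion_iff {t : ℝ} {y : Fin n → ℝ} :
    Fin.cons t y ∈ productRegion (n + 1) Y ↔ 1 ≤ t ∧ y ∈ productRegion n (Y / t) := by
  simp only [productRegion, Set.mem_ofPred_eq, Fin.forall_fin_succ, Fin.cons_zero, Fin.cons_succ,
    Fin.prod_cons, and_assoc]
  refine and_congr_right fun ht ↦ and_congr_right fun _ ↦ ?_
  rw [le_div_iff₀ (one_pos.trans_le ht), mul_comm]

lemma isClosed_productRegion : IsClosed (productRegion n Y) := by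
  refine .inter ?_ (isClosed_le (continuous_finsetProd _ fun i _ ↦ continuous_apply i)
    continuous_const)
  exact isClosed_le (continuous_const (y := (1 : Fin n → ℝ))) continuous_id

lemma isCompact_productRegion : IsCompact (productRegion n Y) :=
  (isCompact_univ_pi fun _ ↦ isCompact_Icc).of_isClosed_subset isClosed_productRegion
    fun _ hx i _ ↦ ⟨hx.1 i, le_of_mem_productRegion hx i⟩

lemma integrableOn_productRegion (m : ℕ) :
    IntegrableOn (fun x ↦ logPowDiv m Y (∏ i, x i)) (productRegion n Y) := by
  refine ContinuousOn.integrableOn_compact isCompact_productRegion fun x hx ↦ ?_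
  have hp : 0 < ∏ i, x i := one_pos.trans_le (one_le_prod_of_mem_productRegion hx)
  have hY : 0 < Y := hp.trans_le hx.2
  have hcont : ContinuousAt (fun x : Fin n → ℝ ↦ ∏ i, x i) x :=
    (continuous_finsetProd _ fun i _ ↦ continuous_apply i).continuousAt
  exact ((continuousAt_const.div hcont hp.ne').log (div_pos hY hp).ne' |>.pow m |>.div hcont
    hp.ne').continuousWithinAt

lemma integral_indicator_productRegion_cons (m : ℕ) (t : ℝ) :
    ∫ y : Fin n → ℝ, (productRegion (n + 1) Y).indicator (fun x ↦ logPowDiv m Y (∏ i, x i))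
      (Fin.cons t y)
    = (Set.Icc 1 Y).indicator
        (fun t ↦ (∫ y in productRegion n (Y / t), logPowDiv m (Y / t) (∏ i, y i)) / t) t := by
  by_cases ht : t ∈ Set.Icc 1 Y
  · rw [Set.indicator_of_mem ht, ← integral_div,
      ← integral_indicator isClosed_productRegion.measurableSet]
    congr 1 with y
    by_cases hy : y ∈ productRegion n (Y / t)
    · rw [Set.indicator_of_mem (cons_mem_productRegion_iff.2 ⟨ht.1, hy⟩), Set.indicator_of_mem hy,
        Fin.prod_cons, logPowDiv_mul]
    · rw [Set.indicator_of_notMem (fun h ↦ hy (cons_mem_productRegion_iff.1 h).2),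
        Set.indicator_of_notMem hy]
  · rw [Set.indicator_of_notMem ht]
    refine integral_eq_zero_of_ae (.of_forall fun y ↦ Set.indicator_of_notMem (fun hy ↦ ht ?_) _)
    exact ⟨(cons_mem_productRegion_iff.1 hy).1, le_of_mem_productRegion hy 0⟩

end productRegion

theorem integral_productRegion (n m : ℕ) {Y : ℝ} (hY : 1 ≤ Y) :
    ∫ x in productRegion n Y, logPowDiv m Y (∏ i, x i)
    = (m.factorial : ℝ) / (m + n).factorial * log Y ^ (m + n) := by
  induction n generalizing Y with
  | zero => simp [productRegion_zero hY, logPowDiv, Measure.real, volume_pi, Nat.factorial_ne_zero]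
  | succ n ih =>
    have hmeas := (isClosed_productRegion (n := n + 1) (Y := Y)).measurableSet
    calc ∫ x in productRegion (n + 1) Y, logPowDiv m Y (∏ i, x i)
        = ∫ t, ∫ y : Fin n → ℝ, (productRegion (n + 1) Y).indicator
            (fun x ↦ logPowDiv m Y (∏ i, x i)) (Fin.cons t y) := by
          rw [← integral_indicator hmeas]
          exact integral_eq_integral_integral_fin_cons
            ((integrable_indicator_iff hmeas).2 (integrableOn_productRegion m))
      _ = ∫ t in Set.Icc 1 Y,
            (∫ y in productRegion n (Y / t), logPowDiv m (Y / t) (∏ i, y i)) / t := by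
          simp_rw [integral_indicator_productRegion_cons]
          exact integral_indicator measurableSet_Icc
      _ = ∫ t in Set.Icc 1 Y, (m.factorial : ℝ) / (m + n).factorial * logPowDiv (m + n) Y t := by
          refine setIntegral_congr_fun measurableSet_Icc fun t ht ↦ ?_
          rw [ih ((one_le_div (one_pos.trans_le ht.1)).2 ht.2), logPowDiv, mul_div_assoc]
      _ = (m.factorial : ℝ) / (m + (n + 1)).factorial * log Y ^ (m + (n + 1)) := by
          rw [integral_const_mul, integral_Icc_eq_integral_Ioc,
            ← intervalIntegral.integral_of_le hY,
            intervalIntegral_logPowDiv _ (one_pos.trans_le hY), ← add_assoc, Nat.factorial_succ]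
          push_cast
          field_simp

theorem integral_log_pow_over_product_region_general (n m : ℕ) (Y : ℝ) (hY : 1 ≤ Y) :
    ∫ x in {x : Fin n → ℝ | (∀ i, 1 ≤ x i) ∧ ∏ i, x i ≤ Y},
      (Real.log (Y / ∏ i, x i)) ^ m / ∏ i, x i
    = (Nat.factorial m : ℝ) / (Nat.factorial (m + n)) * Real.log Y ^ (m + n) :=
  integral_productRegion n m hY

theorem integral_log_pow_over_product_region (n m : ℕ) (hn : 1 ≤ n) (Y : ℝ) (hY : 1 ≤ Y) :
    ∫ x in {x : Fin n → ℝ | (∀ i, 1 ≤ x i) ∧ ∏ i, x i ≤ Y},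
      (Real.log (Y / ∏ i, x i)) ^ m / ∏ i, x i
    = (Nat.factorial m : ℝ) / (Nat.factorial (m + n)) * Real.log Y ^ (m + n) :=
  integral_log_pow_over_product_region_general n m Y hY
end

section
/- For every positive integer ℓ and real 0 < x < 1, the identity 2·∑_{n=1}^∞ xⁿ ∑_{r,t ≥ 0, r+t < n, r ≤ n, t ≤ n} C(r+ℓ-1,ℓ-1)C(n-r+ℓ-1,ℓ-1)C(t+ℓ-1,ℓ-1)C(n-t+ℓ-1,ℓ-1) + ∑_{n=0}^∞ xⁿ ∑_{r=0}^n C(r+ℓ-1,ℓ-1)²C(n-r+ℓ-1,ℓ-1)² = ∑_{n=0}^∞ xⁿ · C(n+2ℓ-1, 2ℓ-1)² holds. -/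
/-!
With `f r = C(r+ℓ-1, ℓ-1)`, Chu–Vandermonde gives `∑ᵣ f r f (n-r) = C(n+2ℓ-1, 2ℓ-1)`, so the
square of the right-hand coefficient is a double sum over `(r, t) ∈ [0, n]²`. Its summand is
invariant under `(r, t) ↦ (n - r, n - t)`, which exchanges the regions `r + t < n` and
`r + t > n`; the antidiagonal `r + t = n` contributes `∑ᵣ f r² f (n-r)²`. The series may be
added termwise since all terms are nonnegative and `C(n+K, K)² ≤ C(2K, K) C(n+2K, 2K)` is
dominated by a convergent negative binomial series.
-/

open Finset PowerSeries

theorem Nat.sum_range_add_choose_mul_add_choose (a b n : ℕ) :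
    ∑ r ∈ range (n + 1), (a + r).choose a * (b + (n - r)).choose b
      = (a + b + 1 + n).choose (a + b + 1) := by
  have hprod : (mk fun n ↦ ((a + n).choose a : ℤ)) * mk (fun n ↦ ((b + n).choose b : ℤ))
      = mk fun n ↦ ((a + b + 1 + n).choose (a + b + 1) : ℤ) := by
    rw [← mk_one_pow_eq_mk_choose_add, ← mk_one_pow_eq_mk_choose_add,
      ← mk_one_pow_eq_mk_choose_add, ← pow_add, add_add_add_comm, add_assoc (a + b)]
  have := congrArg (coeff n) hprod
  rw [coeff_mul, Nat.sum_antidiagonal_eq_sum_range_succ_mk] at this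
  simp only [coeff_mk] at this
  exact_mod_cast this

theorem Nat.sum_range_choose_pred_mul_choose_pred {ℓ : ℕ} (hℓ : 1 ≤ ℓ) (n : ℕ) :
    ∑ r ∈ range (n + 1), (r + ℓ - 1).choose (ℓ - 1) * (n - r + ℓ - 1).choose (ℓ - 1)
      = (n + 2 * ℓ - 1).choose (2 * ℓ - 1) := by
  obtain ⟨k, rfl⟩ : ∃ k, ℓ = k + 1 := ⟨ℓ - 1, by omega⟩
  have e1 (m : ℕ) : m + (k + 1) - 1 = k + m := by omega
  have e2 : 2 * (k + 1) - 1 = k + k + 1 := by omega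
  have e3 : n + 2 * (k + 1) - 1 = k + k + 1 + n := by omega
  simp only [e1, e2, e3, Nat.add_sub_cancel]
  exact sum_range_add_choose_mul_add_choose k k n

theorem Nat.choose_add_sq_le (K n : ℕ) :
    (n + K).choose K ^ 2 ≤ (2 * K).choose K * (n + 2 * K).choose (2 * K) := by
  calc (n + K).choose K ^ 2 ≤ (n + 2 * K).choose K * (n + K).choose K := by
        rw [sq]; gcongr; omega
    _ = (n + 2 * K).choose (2 * K) * (2 * K).choose K := by
        rw [Nat.choose_mul (by omega)]; congr 2 <;> omega
    _ = _ := mul_comm _ _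

theorem summable_geometric_mul_choose_add_sq_of_norm_lt_one {x : ℝ} (hx : ‖x‖ < 1) (K : ℕ) :
    Summable fun n : ℕ ↦ x ^ n * ((n + K).choose K : ℝ) ^ 2 := by
  refine .of_norm_bounded
    (((summable_choose_mul_geometric_of_norm_lt_one (2 * K) (norm_norm x ▸ hx)).mul_left
      ((2 * K).choose K : ℝ))) fun n ↦ ?_
  rw [norm_mul, norm_pow, norm_pow, Real.norm_natCast, mul_comm, ← mul_assoc]
  gcongr
  exact_mod_cast Nat.choose_add_sq_le K n

theorem Finset.sum_range_sum_range_eq_two_mul_sum_lt_add_sum_antidiagonal {R : Type*}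
    [Semiring R] (n : ℕ) (F : ℕ → ℕ → R)
    (hF : ∀ r t, r ≤ n → t ≤ n → F (n - r) (n - t) = F r t) :
    ∑ r ∈ range (n + 1), ∑ t ∈ range (n + 1), F r t
      = 2 * ∑ r ∈ range (n + 1), ∑ t ∈ range (n + 1), (if r + t < n then F r t else 0)
        + ∑ r ∈ range (n + 1), F r (n - r) := by
  have hsplit : ∀ r t, F r t = (if r + t < n then F r t else 0)
      + (if n < r + t then F r t else 0) + (if t = n - r ∧ r ≤ n then F r t else 0) := by
    intro r t
    split_ifs <;> first | omega | simp
  have hreflect : ∑ r ∈ range (n + 1), ∑ t ∈ range (n + 1), (if n < r + t then F r t else 0)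
      = ∑ r ∈ range (n + 1), ∑ t ∈ range (n + 1), (if r + t < n then F r t else 0) := by
    rw [← sum_range_reflect]
    refine sum_congr rfl fun r hr ↦ ?_
    rw [← sum_range_reflect]
    refine sum_congr rfl fun t ht ↦ ?_
    simp only [mem_range] at hr ht
    simp only [add_tsub_cancel_right]
    rw [hF r t (by omega) (by omega)]
    congr 1
    apply propext; omega
  have hdiag : ∑ r ∈ range (n + 1), ∑ t ∈ range (n + 1),
      (if t = n - r ∧ r ≤ n then F r t else 0) = ∑ r ∈ range (n + 1), F r (n - r) := by
    refine sum_congr rfl fun r hr ↦ ?_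
    simp only [mem_range] at hr
    simp [Nat.le_of_lt_succ hr, sum_ite_eq']
  simp_rw [sum_congr rfl fun r _ ↦ sum_congr rfl fun t _ ↦ hsplit r t, sum_add_distrib,
    hreflect, hdiag, two_mul]

theorem Finset.two_mul_sum_lt_add_sum_sq_eq_sq_sum {R : Type*} [CommSemiring R] (f : ℕ → R)
    (n : ℕ) :
    2 * ∑ r ∈ range (n + 1), ∑ t ∈ range (n + 1),
        (if r + t < n then f r * f (n - r) * f t * f (n - t) else 0)
      + ∑ r ∈ range (n + 1), f r ^ 2 * f (n - r) ^ 2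
      = (∑ r ∈ range (n + 1), f r * f (n - r)) ^ 2 := by
  have hdiag : ∑ r ∈ range (n + 1), f r ^ 2 * f (n - r) ^ 2
      = ∑ r ∈ range (n + 1), f r * f (n - r) * f (n - r) * f (n - (n - r)) := by
    refine sum_congr rfl fun r hr ↦ ?_
    rw [Nat.sub_sub_self (mem_range_succ_iff.mp hr)]
    ring
  rw [hdiag, sq, sum_mul_sum]
  simp only [← mul_assoc]
  refine (sum_range_sum_range_eq_two_mul_sum_lt_add_sum_antidiagonal n _ fun r t hr ht ↦ ?_).symm
  simp only [Nat.sub_sub_self hr, Nat.sub_sub_self ht]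
  ring

theorem symmetrized_binomial_series_identity (ℓ : ℕ) (hℓ : 1 ≤ ℓ) (x : ℝ) (hx0 : 0 < x)
    (hx1 : x < 1) :
    (2 * ∑' n : ℕ, x ^ (n + 1) *
        ∑ r ∈ Finset.range (n + 2), ∑ t ∈ Finset.range (n + 2),
          (if r + t < n + 1 then
            (Nat.choose (r + ℓ - 1) (ℓ - 1) : ℝ) * Nat.choose (n + 1 - r + ℓ - 1) (ℓ - 1)
              * Nat.choose (t + ℓ - 1) (ℓ - 1) * Nat.choose (n + 1 - t + ℓ - 1) (ℓ - 1)
          else 0))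
    + ∑' n : ℕ, x ^ n *
        ∑ r ∈ Finset.range (n + 1),
          (Nat.choose (r + ℓ - 1) (ℓ - 1) : ℝ) ^ 2 * (Nat.choose (n - r + ℓ - 1) (ℓ - 1) : ℝ) ^ 2
    = ∑' n : ℕ, x ^ n * (Nat.choose (n + 2 * ℓ - 1) (2 * ℓ - 1) : ℝ) ^ 2 := by
  set f : ℕ → ℝ := fun r ↦ ((r + ℓ - 1).choose (ℓ - 1) : ℝ)
  set a : ℕ → ℝ := fun n ↦ x ^ n * ∑ r ∈ range (n + 1), ∑ t ∈ range (n + 1),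
    (if r + t < n then f r * f (n - r) * f t * f (n - t) else 0)
  set d : ℕ → ℝ := fun n ↦ x ^ n * ∑ r ∈ range (n + 1), f r ^ 2 * f (n - r) ^ 2
  set c : ℕ → ℝ := fun n ↦ x ^ n * ((n + 2 * ℓ - 1).choose (2 * ℓ - 1) : ℝ) ^ 2
  have hconv (n : ℕ) : ∑ r ∈ range (n + 1), f r * f (n - r)
      = ((n + 2 * ℓ - 1).choose (2 * ℓ - 1) : ℝ) := by
    simp only [f]
    exact_mod_cast Nat.sum_range_choose_pred_mul_choose_pred hℓ n
  have hsum (n : ℕ) : 2 * a n + d n = c n := by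
    simp only [a, d, c, ← hconv, ← two_mul_sum_lt_add_sum_sq_eq_sq_sum]
    ring
  have hc : Summable c := by
    have hx : ‖x‖ < 1 := by rw [Real.norm_eq_abs, abs_lt]; constructor <;> linarith
    refine (summable_geometric_mul_choose_add_sq_of_norm_lt_one hx (2 * ℓ - 1)).congr fun n ↦ ?_
    simp only [c, Nat.add_sub_assoc (by omega : 1 ≤ 2 * ℓ)]
  have ha_nonneg (n : ℕ) : 0 ≤ a n := by positivity
  have hd_nonneg (n : ℕ) : 0 ≤ d n := by positivity
  have ha : Summable a :=
    .of_nonneg_of_le ha_nonneg (fun n ↦ by linarith [hsum n, ha_nonneg n, hd_nonneg n]) hc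
  have hd : Summable d :=
    .of_nonneg_of_le hd_nonneg (fun n ↦ by linarith [hsum n, ha_nonneg n]) hc
  calc 2 * ∑' n, a (n + 1) + ∑' n, d n = ∑' n, 2 * a n + ∑' n, d n := by
        rw [tsum_mul_left, ha.tsum_eq_zero_add]
        simp [a]
    _ = ∑' n, c n := by
        rw [← (ha.mul_left 2).tsum_add hd]
        exact tsum_congr hsum
end

section
/- The volume of the region A(X) = {(y₁,y₂,y₃) ∈ [1,∞)³ : y₁y₂² ≤ X, y₁y₃² ≤ X} satisfies Vol(A(X)) ~ X·log X as X → ∞. -/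
/-!
Slicing at fixed `y₁ = x` leaves the square `[1, √(X/x)]²`, which is nonempty exactly for
`x ∈ [1, X]`. Hence `Vol A(X) = ∫₁^X (√(X/x) - 1)² dx = X log X - 3X + 4√X - 1` exactly (an
antiderivative is `X log x - 4√X √x + x`), and the lower-order terms are `O(X) = o(X log X)`.
-/

open MeasureTheory Filter Real Set Asymptotics

theorem continuousOn_sqrt_div_sub_one_sq (X : ℝ) :
    ContinuousOn (fun t => (√(X / t) - 1) ^ 2) (Ici 1) :=
  ((continuous_sqrt.comp_continuousOn (continuousOn_const.div continuousOn_id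
    fun _ ht => (zero_lt_one.trans_le ht).ne')).sub continuousOn_const).pow 2

theorem integral_sqrt_div_sub_one_sq {X : ℝ} (hX : 1 ≤ X) :
    ∫ t in (1 : ℝ)..X, (√(X / t) - 1) ^ 2 = X * log X - 3 * X + 4 * √X - 1 := by
  have hpos : ∀ t ∈ uIcc 1 X, 0 < t := fun t ht => by
    rw [uIcc_of_le hX] at ht; linarith [ht.1]
  have hderiv : ∀ t ∈ uIcc 1 X,
      HasDerivAt (fun t => X * log t - 4 * √X * √t + t) ((√(X / t) - 1) ^ 2) t := by
    intro t ht
    have ht0 := hpos t ht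
    refine ((((hasDerivAt_log ht0.ne').const_mul X).sub
      ((hasDerivAt_sqrt ht0.ne').const_mul (4 * √X))).add (hasDerivAt_id t)).congr_deriv ?_
    have hst : √t ^ 2 = t := sq_sqrt ht0.le
    have hsX : √X ^ 2 = X := sq_sqrt (by linarith)
    rw [sqrt_div' X ht0.le]
    field_simp
    linear_combination 2 * X * hst - 2 * t * hsX
  have hcont := (continuousOn_sqrt_div_sub_one_sq X).mono (uIcc_of_le hX ▸ Icc_subset_Ici_self)
  rw [intervalIntegral.integral_eq_sub_of_hasDerivAt hderiv hcont.intervalIntegrable]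
  simp only [log_one, sqrt_one]
  linear_combination (-4) * mul_self_sqrt (zero_le_one.trans hX)

theorem mul_sq_le_iff_le_sqrt_div {x t X : ℝ} (hx : 0 < x) (ht : 0 < t) :
    x * t ^ 2 ≤ X ↔ t ≤ √(X / x) := by
  rw [le_sqrt' ht, le_div_iff₀ hx, mul_comm]

def regionA (X : ℝ) : Set (ℝ × ℝ × ℝ) :=
  {y | 1 ≤ y.1 ∧ 1 ≤ y.2.1 ∧ 1 ≤ y.2.2 ∧ y.1 * y.2.1 ^ 2 ≤ X ∧ y.1 * y.2.2 ^ 2 ≤ X}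

theorem measurableSet_regionA (X : ℝ) : MeasurableSet (regionA X) := by
  simp only [regionA, ofPred_and]
  refine (measurableSet_le ?_ ?_).inter ((measurableSet_le ?_ ?_).inter
    ((measurableSet_le ?_ ?_).inter ((measurableSet_le ?_ ?_).inter (measurableSet_le ?_ ?_)))) <;>
    fun_prop

theorem preimage_mk_regionA {x : ℝ} (X : ℝ) (hx : 1 ≤ x) :
    Prod.mk x ⁻¹' regionA X = Icc 1 √(X / x) ×ˢ Icc 1 √(X / x) := by
  have hx0 : 0 < x := zero_lt_one.trans_le hx
  ext ⟨u, v⟩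
  simp only [regionA, mem_preimage, mem_ofPred_eq, mem_prod, mem_Icc]
  constructor
  · rintro ⟨-, hu, hv, hxu, hxv⟩
    exact ⟨⟨hu, (mul_sq_le_iff_le_sqrt_div hx0 (by linarith)).1 hxu⟩,
      ⟨hv, (mul_sq_le_iff_le_sqrt_div hx0 (by linarith)).1 hxv⟩⟩
  · rintro ⟨⟨hu, hxu⟩, ⟨hv, hxv⟩⟩
    exact ⟨hx, hu, hv, (mul_sq_le_iff_le_sqrt_div hx0 (by linarith)).2 hxu,
      (mul_sq_le_iff_le_sqrt_div hx0 (by linarith)).2 hxv⟩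

theorem preimage_mk_regionA_eq_empty {x X : ℝ} (hx : x ∉ Icc 1 X) :
    Prod.mk x ⁻¹' regionA X = ∅ := by
  refine eq_empty_of_forall_notMem ?_
  rintro ⟨u, v⟩ ⟨h1 : 1 ≤ x, hu : 1 ≤ u, -, hxu : x * u ^ 2 ≤ X, -⟩
  exact hx ⟨h1, (le_mul_of_one_le_right (by linarith) (one_le_pow₀ hu)).trans hxu⟩

theorem volume_preimage_mk_regionA (x X : ℝ) :
    volume (Prod.mk x ⁻¹' regionA X) =
      (Icc 1 X).indicator (fun x => ENNReal.ofReal ((√(X / x) - 1) ^ 2)) x := by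
  by_cases hx : x ∈ Icc 1 X
  · have h1 : 1 ≤ √(X / x) :=
      one_le_sqrt.2 ((one_le_div (zero_lt_one.trans_le hx.1)).2 hx.2)
    rw [indicator_of_mem hx, preimage_mk_regionA X hx.1, Measure.volume_eq_prod,
      Measure.prod_prod, Real.volume_Icc, ← ENNReal.ofReal_mul (by linarith), sq]
  · rw [indicator_of_notMem hx, preimage_mk_regionA_eq_empty hx, measure_empty]

theorem volume_regionA {X : ℝ} (hX : 1 ≤ X) :
    volume (regionA X) = ENNReal.ofReal (∫ t in (1 : ℝ)..X, (√(X / t) - 1) ^ 2) := by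
  have hint : IntegrableOn (fun t => (√(X / t) - 1) ^ 2) (Icc 1 X) :=
    ((continuousOn_sqrt_div_sub_one_sq X).mono Icc_subset_Ici_self).integrableOn_Icc
  rw [Measure.volume_eq_prod, Measure.prod_apply (measurableSet_regionA X)]
  simp only [volume_preimage_mk_regionA]
  rw [lintegral_indicator measurableSet_Icc, intervalIntegral.integral_of_le hX,
    ← integral_Icc_eq_integral_Ioc,
    ofReal_integral_eq_lintegral_ofReal hint (ae_of_all _ fun t => sq_nonneg _)]

theorem toReal_volume_regionA {X : ℝ} (hX : 1 ≤ X) :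
    (volume (regionA X)).toReal = X * log X - 3 * X + 4 * √X - 1 := by
  rw [volume_regionA hX, ENNReal.toReal_ofReal
    (intervalIntegral.integral_nonneg hX fun _ _ => sq_nonneg _), integral_sqrt_div_sub_one_sq hX]

theorem isEquivalent_mul_log_sub_atTop :
    (fun X => X * log X - 3 * X + 4 * √X - 1) ~[atTop] fun X => X * log X := by
  have hbig : (fun X => -3 * X + 4 * √X - 1) =O[atTop] fun X => X := by
    refine IsBigO.of_bound 8 ?_
    filter_upwards [eventually_ge_atTop 1] with X hX
    have hsX : √X ≤ X := sqrt_le_left (by linarith) |>.2 (by nlinarith)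
    rw [norm_of_nonneg (by linarith : (0 : ℝ) ≤ X), Real.norm_eq_abs, abs_le]
    constructor <;> nlinarith [sqrt_nonneg X]
  have hlittle : (fun X : ℝ => X) =o[atTop] fun X => X * log X := by
    simpa using (isBigO_refl (fun X : ℝ => X) atTop).mul_isLittleO
      (isLittleO_const_log_atTop (c := (1 : ℝ)))
  refine (IsEquivalent.refl.add_isLittleO (hbig.trans_isLittleO hlittle)).congr_left ?_
  exact Eventually.of_forall fun X => by simp only [Pi.add_apply]; ring

theorem volume_A_asymptotic :
    Tendsto (fun X : ℝ =>
        (volume {y : ℝ × ℝ × ℝ | 1 ≤ y.1 ∧ 1 ≤ y.2.1 ∧ 1 ≤ y.2.2 ∧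
            y.1 * y.2.1 ^ 2 ≤ X ∧ y.1 * y.2.2 ^ 2 ≤ X}).toReal / (X * Real.log X))
      atTop (nhds 1) := by
  have hne : ∀ᶠ X in atTop, X * log X ≠ 0 := by
    filter_upwards [eventually_gt_atTop 1] with X hX
    exact mul_ne_zero (by linarith) (log_pos hX).ne'
  refine ((isEquivalent_iff_tendsto_one hne).1 isEquivalent_mul_log_sub_atTop).congr' ?_
  filter_upwards [eventually_ge_atTop 1] with X hX
  rw [Pi.div_apply, ← toReal_volume_regionA hX]
  rfl
end

section
/- For a positive integer k, the Dirichlet series F_k(s₁,s₂) = ∑_{n,m ≥ 1, nm = □} d_k(n)d_k(m)·∏_{p | nm}(1+1/p)^{-1} / (n^{s₁} m^{s₂}) converges absolutely for Re(s₁) > 1/2 and Re(s₂) > 1/2. -/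
lemma divisor_bound (ε : ℝ) (hε : 0 < ε) :
    ∃ C : ℝ, 1 ≤ C ∧ ∀ n : ℕ, 1 ≤ n → ((n.divisors.card : ℝ)) ≤ C * (n : ℝ) ^ ε := by
  classical
  set c : ℝ := 2 ^ ε - 1 with hc
  have h2e : (1:ℝ) < 2 ^ ε := by
    have := Real.one_lt_rpow_iff_of_pos (x := 2) (by norm_num) (y := ε)
    exact this.mpr (Or.inl ⟨by norm_num, hε⟩)
  have hcpos : 0 < c := by simp only [hc]; linarith
  set B : ℝ := max 1 (1/c) with hB
  have hB1 : (1:ℝ) ≤ B := le_max_left _ _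
  have hBc : (1:ℝ) ≤ B * c := by
    have h1 : (1/c) * c ≤ B * c := mul_le_mul_of_nonneg_right (le_max_right _ _) hcpos.le
    have h2 : (1/c) * c = 1 := by field_simp
    calc (1:ℝ) = (1/c) * c := h2.symm
      _ ≤ B * c := h1
  set P : ℕ := ⌈(2:ℝ) ^ (1/ε)⌉₊ with hP
  refine ⟨B ^ P, one_le_pow₀ hB1, fun n hn => ?_⟩
  have hn0 : n ≠ 0 := by omega
  have claim1 : ∀ v : ℕ, (v + 1 : ℝ) ≤ B * ((2:ℝ) ^ ε) ^ v := fun v => by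
    have hber : 1 + (v:ℝ) * c ≤ (1 + c) ^ v := one_add_mul_le_pow (by linarith) v
    have h1c : (1:ℝ) + c = 2 ^ ε := by simp [hc]
    have : (v + 1 : ℝ) ≤ B * (1 + (v:ℝ) * c) := by
      have hv : (0:ℝ) ≤ v := Nat.cast_nonneg v
      nlinarith
    calc (v + 1 : ℝ) ≤ B * (1 + (v:ℝ) * c) := this
      _ ≤ B * (1 + c) ^ v := mul_le_mul_of_nonneg_left hber (by linarith)
      _ = B * ((2:ℝ) ^ ε) ^ v := by rw [h1c]
  have claim2 : ∀ v : ℕ, (v + 1 : ℝ) ≤ ((2:ℝ) ^ (1/ε)) ^ (ε * v) := fun v => by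
    have he : ((2:ℝ) ^ (1/ε)) ^ (ε * v) = (2:ℝ) ^ (v:ℝ) := by
      rw [← Real.rpow_mul (by norm_num : (0:ℝ) ≤ 2)]
      congr 1
      field_simp
    rw [he, Real.rpow_natCast]
    have := one_add_mul_le_pow (a := (1:ℝ)) (by norm_num) v
    have hv : (0:ℝ) ≤ v := Nat.cast_nonneg v
    norm_num at this
    linarith
  -- pointwise bound over primes
  have key : ∀ p ∈ n.primeFactors,
      ((n.factorization p + 1 : ℕ) : ℝ)
        ≤ (if p < P then B else 1) * (p:ℝ) ^ (ε * (n.factorization p)) := by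
    intro p hp
    have hp2 : 2 ≤ p := (Nat.prime_of_mem_primeFactors hp).two_le
    set v := n.factorization p with hv
    have hεv : (0:ℝ) ≤ ε * v := mul_nonneg hε.le (Nat.cast_nonneg v)
    by_cases hsmall : p < P
    · rw [if_pos hsmall]
      have h2p : (2:ℝ) ^ (ε * v) ≤ (p:ℝ) ^ (ε * v) :=
        Real.rpow_le_rpow (by norm_num) (by exact_mod_cast hp2) hεv
      have : (2:ℝ) ^ (ε * v) = ((2:ℝ) ^ ε) ^ v := by
        rw [Real.rpow_mul (by norm_num), Real.rpow_natCast]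
      push_cast
      calc (v + 1 : ℝ) ≤ B * ((2:ℝ) ^ ε) ^ v := claim1 v
        _ = B * (2:ℝ) ^ (ε * v) := by rw [this]
        _ ≤ B * (p:ℝ) ^ (ε * v) := mul_le_mul_of_nonneg_left h2p (by linarith)
    · rw [if_neg hsmall, one_mul]
      have hPp : (2:ℝ) ^ (1/ε) ≤ (p:ℝ) := by
        have : P ≤ p := le_of_not_gt hsmall
        exact le_trans (Nat.le_ceil _) (by exact_mod_cast this)
      have h2p : ((2:ℝ) ^ (1/ε)) ^ (ε * v) ≤ (p:ℝ) ^ (ε * v) :=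
        Real.rpow_le_rpow (Real.rpow_nonneg (by norm_num) _) hPp hεv
      push_cast
      exact le_trans (claim2 v) h2p
  -- assemble
  have hd : ((n.divisors.card : ℝ)) = ∏ p ∈ n.primeFactors, ((n.factorization p + 1 : ℕ) : ℝ) := by
    rw [Nat.card_divisors hn0]
    push_cast
    rfl
  have hrn : (n:ℝ) ^ ε = ∏ p ∈ n.primeFactors, (p:ℝ) ^ (ε * (n.factorization p)) := by
    have hn' : (n:ℝ) = ∏ p ∈ n.primeFactors, ((p:ℝ) ^ (n.factorization p : ℕ)) := by
      conv_lhs => rw [← Nat.factorization_prod_pow_eq_self hn0]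
      rw [Nat.factorization_prod_pow_eq_self hn0]
      conv_lhs => rw [← Nat.factorization_prod_pow_eq_self hn0]
      rw [Finsupp.prod]
      push_cast
      rfl
    rw [hn', ← Real.finset_prod_rpow _ _ (fun p _ => by positivity) ε]
    refine Finset.prod_congr rfl fun p hp => ?_
    rw [← Real.rpow_natCast (p:ℝ) (n.factorization p), ← Real.rpow_mul (Nat.cast_nonneg p)]
    rw [mul_comm]
  calc ((n.divisors.card : ℝ))
      = ∏ p ∈ n.primeFactors, ((n.factorization p + 1 : ℕ) : ℝ) := hd
    _ ≤ ∏ p ∈ n.primeFactors, (if p < P then B else 1) * (p:ℝ) ^ (ε * (n.factorization p)) :=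
        Finset.prod_le_prod (fun p _ => by positivity) key
    _ = (∏ p ∈ n.primeFactors, (if p < P then B else 1))
          * ∏ p ∈ n.primeFactors, (p:ℝ) ^ (ε * (n.factorization p)) := Finset.prod_mul_distrib
    _ ≤ B ^ P * (n:ℝ) ^ ε := by
        rw [← hrn]
        refine mul_le_mul_of_nonneg_right ?_ (Real.rpow_nonneg (Nat.cast_nonneg n) ε)
        rw [← Finset.prod_filter]
        rw [Finset.prod_const]
        refine pow_le_pow_right₀ hB1 ?_
        calc (n.primeFactors.filter (· < P)).card ≤ (Finset.range P).card := by
              refine Finset.card_le_card fun x hx => ?_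
              exact Finset.mem_range.mpr (Finset.mem_filter.mp hx).2
          _ = P := Finset.card_range P


/-- The `k`-fold divisor function. -/
noncomputable def dfold (k n : ℕ) : ℕ :=
  Nat.card {f : Fin k → ℕ // (∀ i, 0 < f i) ∧ ∏ i, f i = n}

lemma dfold_le_pow (k n : ℕ) (hk : 1 ≤ k) (hn : 0 < n) :
    dfold k n ≤ n.divisors.card ^ (k - 1) := by
  classical
  set α := {f : Fin k → ℕ // (∀ i, 0 < f i) ∧ ∏ i, f i = n} with hα
  have hkk : k - 1 ≤ k := Nat.sub_le k 1
  set L : Fin k := ⟨k - 1, by omega⟩ with hL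
  let Φ : α → (Fin (k-1) → {x // x ∈ n.divisors}) := fun f i =>
    ⟨f.1 (Fin.castLE hkk i), by
      rw [Nat.mem_divisors]
      refine ⟨?_, hn.ne'⟩
      have := Finset.dvd_prod_of_mem f.1 (Finset.mem_univ (Fin.castLE hkk i))
      rwa [f.2.2] at this⟩
  have hinj : Function.Injective Φ := by
    intro f g h
    have key : ∀ j : Fin k, j ≠ L → f.1 j = g.1 j := by
      intro j hj
      have hjv : (j : ℕ) < k - 1 := by
        have := j.2
        rcases lt_or_eq_of_le (Nat.le_of_lt_succ (by omega : (j:ℕ) < (k-1)+1)) with h' | h'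
        · exact h'
        · exact absurd (Fin.ext h' : j = L) hj
      have := congrFun h ⟨j, hjv⟩
      have := congrArg Subtype.val this
      simpa [Φ, Fin.ext_iff] using this
    have hprod : ∏ j ∈ Finset.univ.erase L, f.1 j = ∏ j ∈ Finset.univ.erase L, g.1 j :=
      Finset.prod_congr rfl fun j hj => key j (Finset.ne_of_mem_erase hj)
    have hppos : 0 < ∏ j ∈ Finset.univ.erase L, f.1 j :=
      Finset.prod_pos fun j _ => f.2.1 j
    have hfL : f.1 L * ∏ j ∈ Finset.univ.erase L, f.1 j = n := by
      rw [Finset.mul_prod_erase _ _ (Finset.mem_univ L)]; exact f.2.2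
    have hgL : g.1 L * ∏ j ∈ Finset.univ.erase L, g.1 j = n := by
      rw [Finset.mul_prod_erase _ _ (Finset.mem_univ L)]; exact g.2.2
    have hLeq : f.1 L = g.1 L := by
      rw [← hprod] at hgL
      exact Nat.eq_of_mul_eq_mul_right hppos (by rw [mul_comm (f.1 L), mul_comm (g.1 L)] at *; omega)
    refine Subtype.ext (funext fun i => ?_)
    by_cases hi : i = L
    · rw [hi]; exact hLeq
    · exact key i hi
  calc dfold k n = Nat.card α := rfl
    _ ≤ Nat.card (Fin (k-1) → {x // x ∈ n.divisors}) := Nat.card_le_card_of_injective Φ hinj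
    _ = n.divisors.card ^ (k - 1) := by
        rw [Nat.card_fun]
        simp only [Nat.card_eq_fintype_card, Fintype.card_coe, Fintype.card_fin]






lemma dfold_bound (k : ℕ) (hk : 1 ≤ k) (ε : ℝ) (hε : 0 < ε) :
    ∃ C : ℝ, 1 ≤ C ∧ ∀ n : ℕ, 1 ≤ n → ((dfold k n : ℝ)) ≤ C * (n : ℝ) ^ ε := by
  have hk0 : (0:ℝ) < k := by exact_mod_cast hk
  obtain ⟨C₀, hC₀1, hC₀⟩ := divisor_bound (ε / k) (by positivity)
  refine ⟨C₀ ^ k, one_le_pow₀ hC₀1, fun n hn => ?_⟩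
  have hn1 : (1:ℝ) ≤ (n:ℝ) := by exact_mod_cast hn
  have h1 : ((dfold k n : ℝ)) ≤ ((n.divisors.card : ℝ)) ^ (k-1) := by
    have := dfold_le_pow k n hk (by omega)
    exact_mod_cast this
  have h2 : ((n.divisors.card : ℝ)) ^ (k-1) ≤ (C₀ * (n:ℝ) ^ (ε/k)) ^ (k-1) :=
    pow_le_pow_left₀ (Nat.cast_nonneg _) (hC₀ n hn) _
  have h3 : (C₀ * (n:ℝ) ^ (ε/k)) ^ (k-1) = C₀ ^ (k-1) * ((n:ℝ) ^ (ε/k)) ^ (k-1) := mul_pow _ _ _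
  have h4 : C₀ ^ (k-1) ≤ C₀ ^ k := pow_le_pow_right₀ hC₀1 (Nat.sub_le k 1)
  have h5 : ((n:ℝ) ^ (ε/k)) ^ (k-1) ≤ (n:ℝ) ^ ε := by
    rw [← Real.rpow_natCast ((n:ℝ) ^ (ε/k)) (k-1), ← Real.rpow_mul (by linarith)]
    refine Real.rpow_le_rpow_of_exponent_le hn1 ?_
    have hkm : ((k-1 : ℕ):ℝ) ≤ (k:ℝ) := by exact_mod_cast Nat.sub_le k 1
    calc ε / k * ((k-1:ℕ):ℝ) ≤ ε / k * k := by
          exact mul_le_mul_of_nonneg_left hkm (by positivity)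
      _ = ε := by field_simp
  calc ((dfold k n : ℝ)) ≤ (C₀ * (n:ℝ) ^ (ε/k)) ^ (k-1) := le_trans h1 h2
    _ = C₀ ^ (k-1) * ((n:ℝ) ^ (ε/k)) ^ (k-1) := h3
    _ ≤ C₀ ^ k * (n:ℝ) ^ ε := by
        refine mul_le_mul h4 h5 (by positivity) (by positivity)





theorem Fk_abs_convergence (k : ℕ) (hk : 1 ≤ k) (s₁ s₂ : ℂ)
    (h₁ : 1 / 2 < s₁.re) (h₂ : 1 / 2 < s₂.re) :
    Summable (fun p : ℕ × ℕ =>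
      if 0 < p.1 ∧ 0 < p.2 ∧ IsSquare (p.1 * p.2) then
        ‖((dfold k p.1 * dfold k p.2 : ℕ) : ℂ)
            * (∏ q ∈ (p.1 * p.2).primeFactors, (1 + 1 / (q : ℂ))⁻¹)
            / ((p.1 : ℂ) ^ s₁ * (p.2 : ℂ) ^ s₂)‖
      else 0) := by
  classical
  set σ : ℝ := min s₁.re s₂.re with hσdef
  have hσ : 1/2 < σ := lt_min h₁ h₂
  set ε : ℝ := (2*σ - 1)/8 with hεdef
  have hεpos : 0 < ε := by rw [hεdef]; linarith
  obtain ⟨C, hC1, hC⟩ := dfold_bound k hk ε hεpos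
  obtain ⟨D, hD1, hD⟩ := divisor_bound ε hεpos
  set S : Set (ℕ × ℕ) := {p | 0 < p.1 ∧ 0 < p.2 ∧ IsSquare (p.1 * p.2)} with hS
  set G : ℕ × ℕ → ℝ := fun p => C^2 * (((p.1 * p.2 : ℕ)) : ℝ) ^ (ε - σ) with hG
  -- Step 1: pointwise bound
  have hf_le : ∀ p : ℕ × ℕ,
      (if 0 < p.1 ∧ 0 < p.2 ∧ IsSquare (p.1 * p.2) then
        ‖((dfold k p.1 * dfold k p.2 : ℕ) : ℂ)
            * (∏ q ∈ (p.1 * p.2).primeFactors, (1 + 1 / (q : ℂ))⁻¹)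
            / ((p.1 : ℂ) ^ s₁ * (p.2 : ℂ) ^ s₂)‖
      else 0) ≤ S.indicator G p := by
    intro ⟨n, m⟩
    by_cases hmem : (n, m) ∈ S
    · have hn : 0 < n := hmem.1
      have hm : 0 < m := hmem.2.1
      rw [if_pos (by exact hmem), Set.indicator_of_mem hmem]
      have hn1 : (1:ℝ) ≤ (n:ℝ) := by exact_mod_cast hn
      have hm1 : (1:ℝ) ≤ (m:ℝ) := by exact_mod_cast hm
      have hnorm1 : ‖((dfold k n * dfold k m : ℕ) : ℂ)‖ = ((dfold k n * dfold k m : ℕ) : ℝ) := by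
        simp [Complex.norm_natCast]
      have hnorm2 : ‖∏ q ∈ (n * m).primeFactors, (1 + 1 / (q : ℂ))⁻¹‖ ≤ 1 := by
        rw [norm_prod]
        refine Finset.prod_le_one (fun q _ => norm_nonneg _) (fun q _ => ?_)
        have h1 : (1:ℝ) ≤ ‖(1:ℂ) + 1/(q:ℂ)‖ := by
          have hcast : ((1:ℂ) + 1/(q:ℂ)) = (((1 + 1/(q:ℝ)):ℝ):ℂ) := by push_cast; ring
          rw [hcast, Complex.norm_real]
          have hq0 : (0:ℝ) ≤ 1/(q:ℝ) := by positivity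
          rw [Real.norm_eq_abs, abs_of_nonneg (by linarith)]
          linarith
        rw [norm_inv]
        exact inv_le_one_of_one_le₀ h1
      have hnorm3 : ‖(n : ℂ) ^ s₁ * (m : ℂ) ^ s₂‖ = (n:ℝ) ^ s₁.re * (m:ℝ) ^ s₂.re := by
        rw [norm_mul, Complex.norm_natCast_cpow_of_pos hn, Complex.norm_natCast_cpow_of_pos hm]
      have hnum : ‖((dfold k n * dfold k m : ℕ) : ℂ)
            * (∏ q ∈ (n * m).primeFactors, (1 + 1 / (q : ℂ))⁻¹)‖
            ≤ ((dfold k n : ℝ)) * ((dfold k m : ℝ)) := by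
        rw [norm_mul, hnorm1]
        calc ((dfold k n * dfold k m : ℕ) : ℝ) * ‖∏ q ∈ (n * m).primeFactors, (1 + 1 / (q : ℂ))⁻¹‖
            ≤ ((dfold k n * dfold k m : ℕ) : ℝ) * 1 :=
              mul_le_mul_of_nonneg_left hnorm2 (Nat.cast_nonneg _)
          _ = ((dfold k n : ℝ)) * ((dfold k m : ℝ)) := by push_cast; ring
      have hdfold : ((dfold k n : ℝ)) * ((dfold k m : ℝ)) ≤ C^2 * ((n*m : ℕ) : ℝ) ^ ε := by
        have ha := hC n hn
        have hb := hC m hm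
        have hmr : ((n*m : ℕ) : ℝ) ^ ε = (n:ℝ) ^ ε * (m:ℝ) ^ ε := by
          push_cast
          exact Real.mul_rpow (by linarith) (by linarith)
        rw [hmr]
        have hd1 : (0:ℝ) ≤ (dfold k n : ℝ) := Nat.cast_nonneg _
        have hr1 : (0:ℝ) ≤ (n:ℝ) ^ ε := Real.rpow_nonneg (by linarith) _
        nlinarith [Real.rpow_nonneg (by linarith : (0:ℝ) ≤ (m:ℝ)) ε, hC1]
      have hden : ((n*m : ℕ) : ℝ) ^ σ ≤ (n:ℝ) ^ s₁.re * (m:ℝ) ^ s₂.re := by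
        have hmr : ((n*m : ℕ) : ℝ) ^ σ = (n:ℝ) ^ σ * (m:ℝ) ^ σ := by
          push_cast
          exact Real.mul_rpow (by linarith) (by linarith)
        rw [hmr]
        refine mul_le_mul (Real.rpow_le_rpow_of_exponent_le hn1 (min_le_left _ _))
          (Real.rpow_le_rpow_of_exponent_le hm1 (min_le_right _ _))
          (Real.rpow_nonneg (by linarith) _) (Real.rpow_nonneg (by linarith) _)
      have hnm1 : (1:ℝ) ≤ ((n*m : ℕ) : ℝ) := by
        have h' : 1 ≤ n * m := Nat.one_le_iff_ne_zero.mpr (by positivity)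
        exact_mod_cast h'
      have hnmpos : (0:ℝ) < ((n*m : ℕ) : ℝ) := by linarith
      rw [norm_div, hnorm3]
      calc ‖((dfold k n * dfold k m : ℕ) : ℂ) * ∏ q ∈ (n * m).primeFactors, (1 + 1 / (q : ℂ))⁻¹‖
            / ((n:ℝ) ^ s₁.re * (m:ℝ) ^ s₂.re)
          ≤ (C^2 * ((n*m : ℕ) : ℝ) ^ ε) / ((n*m : ℕ) : ℝ) ^ σ := by
            refine div_le_div₀ (by positivity) (le_trans hnum hdfold)
              (Real.rpow_pos_of_pos hnmpos σ) hden
        _ = C^2 * ((n*m : ℕ) : ℝ) ^ (ε - σ) := by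
            rw [Real.rpow_sub hnmpos]
            ring
        _ = G (n, m) := rfl
    · rw [Set.indicator_of_notMem hmem,
        if_neg (show ¬(0 < (n, m).1 ∧ 0 < (n, m).2 ∧ IsSquare ((n, m).1 * (n, m).2)) from
          fun hc => hmem hc)]
  -- Step 2: summability of the comparison function
  have hsum : Summable (S.indicator G) := by
    rw [← summable_subtype_iff_indicator]
    set H : ℕ × ℕ → ℝ := fun q =>
      if q.2 ∈ (q.1 ^ 2).divisors then C^2 * (((q.1 ^ 2 : ℕ)) : ℝ) ^ (ε - σ) else 0 with hH
    have hHnn : ∀ q, 0 ≤ H q := fun q => by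
      rw [hH]
      dsimp only
      split
      · have : (0:ℝ) ≤ (((q.1 ^ 2 : ℕ)) : ℝ) ^ (ε - σ) := Real.rpow_nonneg (Nat.cast_nonneg _) _
        positivity
      · exact le_rfl
    have hlt : 4*ε - 2*σ < -1 := by rw [hεdef]; linarith
    have hHsum : Summable H := by
      rw [summable_prod_of_nonneg hHnn]
      constructor
      · intro w
        refine summable_of_ne_finset_zero (s := (w^2).divisors) (fun n hn => ?_)
        simp only [hH]
        exact if_neg hn
      · have hts : ∀ w : ℕ, ∑' n, H (w, n)
            = ((w^2).divisors.card : ℝ) * (C^2 * (((w^2 : ℕ)) : ℝ) ^ (ε - σ)) := by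
          intro w
          rw [tsum_eq_sum (s := (w^2).divisors) (fun n hn => by simp only [hH]; exact if_neg hn)]
          rw [Finset.sum_congr rfl (fun n hn => by simp only [hH]; exact if_pos hn)]
          rw [Finset.sum_const, nsmul_eq_mul]
        refine Summable.of_nonneg_of_le (fun w => tsum_nonneg (fun n => hHnn _)) (fun w => ?_)
          (Summable.mul_left (D * C^2) (Real.summable_nat_rpow.mpr hlt))
        rw [hts w]
        by_cases hw : w = 0
        · subst hw
          norm_num
          positivity
        · have hw1 : 1 ≤ w := Nat.one_le_iff_ne_zero.mpr hw
          have hw2 : 1 ≤ w^2 := Nat.one_le_pow _ _ (by omega)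
          have hwpos : (0:ℝ) < (w:ℝ) := by exact_mod_cast hw1
          have hXpos : (0:ℝ) < ((w^2 : ℕ) : ℝ) := by positivity
          have hcard := hD (w^2) hw2
          have hstep : ((w^2).divisors.card : ℝ) * (C^2 * (((w^2 : ℕ)) : ℝ) ^ (ε - σ))
              ≤ (D * (((w^2 : ℕ)) : ℝ) ^ ε) * (C^2 * (((w^2 : ℕ)) : ℝ) ^ (ε - σ)) := by
            refine mul_le_mul_of_nonneg_right hcard ?_
            have : (0:ℝ) ≤ (((w^2 : ℕ)) : ℝ) ^ (ε - σ) := Real.rpow_nonneg (by positivity) _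
            positivity
          have heq : (D * (((w^2 : ℕ)) : ℝ) ^ ε) * (C^2 * (((w^2 : ℕ)) : ℝ) ^ (ε - σ))
              = D * C^2 * (w:ℝ) ^ (4*ε - 2*σ) := by
            have h1 : (((w^2 : ℕ)) : ℝ) ^ ε * (((w^2 : ℕ)) : ℝ) ^ (ε - σ)
                = (((w^2 : ℕ)) : ℝ) ^ (2*ε - σ) := by
              rw [← Real.rpow_add hXpos]
              ring_nf
            have h2 : (((w^2 : ℕ)) : ℝ) ^ (2*ε - σ) = (w:ℝ) ^ (4*ε - 2*σ) := by
              have hc : (((w^2 : ℕ)) : ℝ) = (w:ℝ) ^ (2:ℕ) := by push_cast; ring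
              rw [hc, ← Real.rpow_natCast (w:ℝ) 2, ← Real.rpow_mul hwpos.le]
              norm_num
              ring_nf
            calc (D * (((w^2 : ℕ)) : ℝ) ^ ε) * (C^2 * (((w^2 : ℕ)) : ℝ) ^ (ε - σ))
                = D * C^2 * ((((w^2 : ℕ)) : ℝ) ^ ε * (((w^2 : ℕ)) : ℝ) ^ (ε - σ)) := by ring
              _ = D * C^2 * (w:ℝ) ^ (4*ε - 2*σ) := by rw [h1, h2]
          calc ((w^2).divisors.card : ℝ) * (C^2 * (((w^2 : ℕ)) : ℝ) ^ (ε - σ))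
              ≤ (D * (((w^2 : ℕ)) : ℝ) ^ ε) * (C^2 * (((w^2 : ℕ)) : ℝ) ^ (ε - σ)) := hstep
            _ = D * C^2 * (w:ℝ) ^ (4*ε - 2*σ) := heq
    -- transfer along the injection Ψ
    set Ψ : S → ℕ × ℕ := fun x => (Nat.sqrt (x.1.1 * x.1.2), x.1.1) with hΨ
    have hΨinj : Function.Injective Ψ := by
      rintro ⟨⟨n₁, m₁⟩, hx⟩ ⟨⟨n₂, m₂⟩, hy⟩ h
      obtain ⟨r₁, hr₁⟩ := hx.2.2
      obtain ⟨r₂, hr₂⟩ := hy.2.2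
      have hs1 : Nat.sqrt (n₁ * m₁) = r₁ := by rw [hr₁, Nat.sqrt_eq]
      have hs2 : Nat.sqrt (n₂ * m₂) = r₂ := by rw [hr₂, Nat.sqrt_eq]
      have h' : Nat.sqrt (n₁ * m₁) = Nat.sqrt (n₂ * m₂) ∧ n₁ = n₂ := by
        simpa [hΨ, Prod.ext_iff] using h
      have hnn : n₁ = n₂ := h'.2
      have hrr : r₁ = r₂ := by rw [← hs1, ← hs2, h'.1]
      have hmm : m₁ = m₂ := by
        have e1 : n₁ * m₁ = r₁ * r₁ := hr₁
        have e2 : n₂ * m₂ = r₂ * r₂ := hr₂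
        have e3 : n₁ * m₁ = n₁ * m₂ := by rw [e1, hrr, ← e2, ← hnn]
        exact Nat.eq_of_mul_eq_mul_left hx.1 e3
      apply Subtype.ext
      simp [hnn, hmm]
    have hcomp : (G ∘ (Subtype.val : S → ℕ × ℕ)) = H ∘ Ψ := by
      funext x
      obtain ⟨⟨n, m⟩, hx⟩ := x
      obtain ⟨r, hr⟩ := hx.2.2
      have hs : Nat.sqrt (n * m) = r := by rw [hr, Nat.sqrt_eq]
      have hw : Nat.sqrt (n * m) ^ 2 = n * m := by rw [hs, sq, hr]
      have hmem : n ∈ (Nat.sqrt (n * m) ^ 2).divisors := by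
        rw [hw, Nat.mem_divisors]
        refine ⟨Dvd.intro m rfl, ?_⟩
        have h1 : 0 < n := hx.1
        have h2 : 0 < m := hx.2.1
        positivity
      simp only [Function.comp_apply, hH, hΨ, hG]
      rw [if_pos hmem, hw]
    have hfin := hHsum.comp_injective hΨinj
    rwa [← hcomp] at hfin
  refine Summable.of_nonneg_of_le (fun p => ?_) hf_le hsum
  split
  · exact norm_nonneg _
  · exact le_rfl
end

section
/- For a positive integer k, the function H_k(p) := (1-1/p)^{2k²+k} · (1/(p+1)) · (1 + (p/2)·((1+1/√p)^{-2k} + (1-1/√p)^{-2k})) satisfies H_k(p) = 1 + O(1/p²) as p → ∞, and consequently the Euler product ∏_p H_k(p) over all primes converges absolutely. -/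
/-!
Put `x = 1/√p` and `q = x² = 1/p`. Since `(1 + x)^{2k} (1 - x)^{2k} = (1 - q)^{2k}` and
`(1 + x)^{2k} + (1 - x)^{2k}` is twice a polynomial `E` in `q`, clearing denominators gives
`H_k(p) = N(q) / (1 + q)` with `N = X (1 - X)^{2k²+k} + (1 - X)^{C(2k,2)} E`. As
`2k² + k = C(2k,2) + 2k` and `E = 1 + C(2k,2) X + O(X²)`, the linear terms cancel and
`N = 1 + X + X² Q`, so `H_k(p) - 1 = q² Q(q) / (1 + q) = O(1/p²)`. Comparison with `∑ 1/p²` gives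
absolute summability of `H_k(p) - 1`, hence convergence of the product.
-/

/-- The local Euler factor appearing in the arithmetic constant `a_k^S(𝒯)`. -/
noncomputable def Hfactor (k : ℕ) (p : ℝ) : ℝ :=
  (1 - 1 / p) ^ (2 * k ^ 2 + k) * (1 / (p + 1)) *
    (1 + (p / 2) * (((1 + 1 / Real.sqrt p) ^ (2 * k))⁻¹ + ((1 - 1 / Real.sqrt p) ^ (2 * k))⁻¹))

open Polynomial Finset

theorem Polynomial.X_sq_dvd_sub_eval_zero_add_derivative_eval_zero_mul_X {R : Type*} [CommRing R]
    (P : R[X]) :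
    X ^ 2 ∣ P - (C (P.eval 0) + C (P.derivative.eval 0) * X) := by
  rw [X_pow_dvd_iff]
  intro d hd
  interval_cases d
  · simp [coeff_zero_eq_eval_zero]
  · simp [← coeff_zero_eq_eval_zero, coeff_derivative, coeff_C]

noncomputable def evenBinomial (n : ℕ) : ℝ[X] :=
  ∑ i ∈ range (n + 1), if Even i then C (n.choose i : ℝ) * X ^ (i / 2) else 0

theorem one_add_pow_add_one_sub_pow (n : ℕ) (x : ℝ) :
    (1 + x) ^ n + (1 - x) ^ n = 2 * (evenBinomial n).eval (x ^ 2) := by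
  simp only [evenBinomial, eval_finsetSum, apply_ite (eval (x ^ 2)), eval_mul, eval_C, eval_pow,
    eval_X, eval_zero, mul_sum, add_comm (1 : ℝ) x, sub_eq_neg_add, add_pow, one_pow, mul_one,
    ← sum_add_distrib]
  refine sum_congr rfl fun i _ => ?_
  rcases Nat.even_or_odd i with hi | hi
  · rw [hi.neg_pow, if_pos hi, ← pow_mul, Nat.mul_div_cancel' hi.two_dvd]; ring
  · rw [hi.neg_pow, if_neg (Nat.not_even_iff_odd.mpr hi)]; ring

theorem evenBinomial_eval_zero (n : ℕ) : (evenBinomial n).eval 0 = 1 := by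
  rw [evenBinomial, eval_finsetSum, sum_eq_single 0]
  · simp
  · intro i _ hi
    split_ifs with he
    · have : i / 2 ≠ 0 := by obtain ⟨j, rfl⟩ := he; omega
      simp [this]
    · simp
  · simp

theorem evenBinomial_derivative_eval_zero (n : ℕ) :
    (evenBinomial n).derivative.eval 0 = n.choose 2 := by
  rw [evenBinomial, derivative_sum, eval_finsetSum, sum_eq_single 2]
  · simp
  · intro i _ hi
    split_ifs with he
    · obtain ⟨j, rfl⟩ := he
      have : j + j ≠ 2 := hi
      rcases Nat.lt_or_ge j 2 with hj | hj
      · interval_cases j <;> simp_all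
      · have : (j + j) / 2 - 1 ≠ 0 := by omega
        simp [derivative_X_pow, zero_pow this]
    · simp
  · intro h
    have : n < 2 := by simpa using h
    simp [Nat.choose_eq_zero_of_lt this]

theorem Nat.two_mul_sq_add_self_eq_choose_two_add (k : ℕ) :
    2 * k ^ 2 + k = (2 * k).choose 2 + 2 * k := by
  rw [Nat.choose_two_right]
  rcases k with _ | k
  · simp
  · have : 2 * (k + 1) * (2 * (k + 1) - 1) = 2 * ((k + 1) * (2 * k + 1)) := by
      rw [show 2 * (k + 1) - 1 = 2 * k + 1 by omega]; ring
    rw [this, Nat.mul_div_cancel_left _ two_pos]; ring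

noncomputable def hfactorNumerator (k : ℕ) : ℝ[X] :=
  X * (1 - X) ^ (2 * k ^ 2 + k) + (1 - X) ^ ((2 * k).choose 2) * evenBinomial (2 * k)

theorem hfactorNumerator_eval_zero (k : ℕ) : (hfactorNumerator k).eval 0 = 1 := by
  simp [hfactorNumerator, evenBinomial_eval_zero]

theorem hfactorNumerator_derivative_eval_zero (k : ℕ) :
    (hfactorNumerator k).derivative.eval 0 = 1 := by
  simp [hfactorNumerator, derivative_pow, evenBinomial_eval_zero,
    evenBinomial_derivative_eval_zero]

theorem X_sq_dvd_hfactorNumerator_sub (k : ℕ) : X ^ 2 ∣ hfactorNumerator k - (1 + X) := by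
  simpa [hfactorNumerator_eval_zero, hfactorNumerator_derivative_eval_zero] using
    X_sq_dvd_sub_eval_zero_add_derivative_eval_zero_mul_X (hfactorNumerator k)

theorem Hfactor_eq_eval_div (k : ℕ) {p : ℝ} (hp : 1 < p) :
    Hfactor k p = (hfactorNumerator k).eval p⁻¹ / (1 + p⁻¹) := by
  rw [Hfactor]
  simp only [one_div]
  set x := (Real.sqrt p)⁻¹
  have hx : x ^ 2 = p⁻¹ := by simp [x, Real.sq_sqrt (by linarith : 0 ≤ p)]
  have hx1 : x < 1 := inv_lt_one_of_one_lt₀ (Real.lt_sqrt zero_le_one |>.mpr (by simpa))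
  have hA : (1 + x) ^ (2 * k) ≠ 0 := by positivity
  have hB : (1 - x) ^ (2 * k) ≠ 0 := pow_ne_zero _ (by linarith)
  have hprod : (1 + x) ^ (2 * k) * (1 - x) ^ (2 * k) = (1 - p⁻¹) ^ (2 * k) := by
    rw [← mul_pow, ← hx]; ring
  rw [inv_add_inv hA hB, one_add_pow_add_one_sub_pow, hprod, hx]
  simp only [hfactorNumerator, eval_add, eval_mul, eval_pow, eval_sub, eval_one, eval_X]
  rw [Nat.two_mul_sq_add_self_eq_choose_two_add, pow_add]
  have hB' : (1 - p⁻¹) ^ (2 * k) ≠ 0 := hprod ▸ mul_ne_zero hA hB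
  generalize (1 - p⁻¹) ^ (2 * k) = B at hB' ⊢
  have : p ≠ 0 := by positivity
  have : p + 1 ≠ 0 := by positivity
  field_simp

theorem exists_abs_eval_div_one_add_sub_one_le {P : ℝ[X]} (hP : X ^ 2 ∣ P - (1 + X)) :
    ∃ C > 0, ∀ q ∈ Set.Icc (0 : ℝ) 1, |P.eval q / (1 + q) - 1| ≤ C * q ^ 2 := by
  obtain ⟨Q, hQ⟩ := hP
  obtain ⟨C, hC⟩ := isCompact_Icc.exists_bound_of_continuousOn
    (Q.continuous.continuousOn (s := Set.Icc (0 : ℝ) 1))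
  refine ⟨max C 1, by positivity, fun q hq => ?_⟩
  have h1q : 0 < 1 + q := by linarith [hq.1]
  have hPq : P.eval q - (1 + q) = q ^ 2 * Q.eval q := by simpa using congrArg (eval q) hQ
  calc |P.eval q / (1 + q) - 1| = q ^ 2 * |Q.eval q| / (1 + q) := by
        rw [div_sub_one h1q.ne', hPq, abs_div, abs_mul, abs_of_pos h1q, abs_sq]
    _ ≤ q ^ 2 * |Q.eval q| := div_le_self (by positivity) (by linarith [hq.1])
    _ ≤ q ^ 2 * max C 1 := by gcongr; exact (hC q hq).trans (le_max_left _ _)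
    _ = max C 1 * q ^ 2 := mul_comm _ _

theorem exists_abs_Hfactor_sub_one_le (k : ℕ) :
    ∃ C > 0, ∀ p : ℝ, 1 < p → |Hfactor k p - 1| ≤ C / p ^ 2 := by
  obtain ⟨C, hC, hbound⟩ :=
    exists_abs_eval_div_one_add_sub_one_le (X_sq_dvd_hfactorNumerator_sub k)
  refine ⟨C, hC, fun p hp => ?_⟩
  have hq : p⁻¹ ∈ Set.Icc (0 : ℝ) 1 := ⟨by positivity, inv_le_one_of_one_le₀ hp.le⟩
  simpa [Hfactor_eq_eval_div k hp, div_eq_mul_inv] using hbound p⁻¹ hq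

theorem Hfactor_one_add_O_and_multipliable_general (k : ℕ) :
    (∃ C : ℝ, 0 < C ∧ ∀ p : ℕ, p.Prime → |Hfactor k p - 1| ≤ C / (p : ℝ) ^ 2)
    ∧ Summable (fun p : Nat.Primes => |Hfactor k p - 1|)
    ∧ Multipliable (fun p : Nat.Primes => Hfactor k p) := by
  obtain ⟨C, hC, hbound⟩ := exists_abs_Hfactor_sub_one_le k
  have hprime (p : ℕ) (hp : p.Prime) : |Hfactor k p - 1| ≤ C / (p : ℝ) ^ 2 :=
    hbound p (by exact_mod_cast hp.one_lt)
  have hmajorant : Summable (fun p : Nat.Primes => C / ((p : ℕ) : ℝ) ^ 2) := by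
    have h : Summable (fun p : Nat.Primes => 1 / ((p : ℕ) : ℝ) ^ 2) :=
      (Real.summable_one_div_nat_pow.mpr one_lt_two).comp_injective Nat.Primes.coe_nat_injective
    simpa [div_eq_mul_inv] using h.mul_left C
  have hsummable : Summable (fun p : Nat.Primes => |Hfactor k p - 1|) :=
    hmajorant.of_nonneg_of_le (fun _ => abs_nonneg _) fun p => hprime p p.prop
  refine ⟨⟨C, hC, hprime⟩, hsummable, ?_⟩
  simpa using Real.multipliable_one_add_of_summable hsummable.of_abs

theorem Hfactor_one_add_O_and_multipliable (k : ℕ) (hk : 1 ≤ k) :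
    (∃ C : ℝ, 0 < C ∧ ∀ p : ℕ, p.Prime → |Hfactor k p - 1| ≤ C / (p : ℝ) ^ 2)
    ∧ Summable (fun p : Nat.Primes => |Hfactor k p - 1|)
    ∧ Multipliable (fun p : Nat.Primes => Hfactor k p) :=
  Hfactor_one_add_O_and_multipliable_general k
end

section
/- For a positive integer k, (1-1/p)^{2k²+k}·(1/(p+1))·(1 + (p/2)·((1+1/√p)^{-2k} + (1-1/√p)^{-2k})) = (1-1/p)^{2k²+k}·(1+1/p)^{-1}·∑_{h=0}^∞ C(2h+2k-1,2h)·p^{-h} + (1-1/p)^{2k²+k}·(1 - (1+1/p)^{-1}) for every prime p; equivalently, 1 + (1+1/p)^{-1}·(-1 + ∑_{h=0}^∞ C(2h+2k-1,2h)p^{-h}) = (1/(p+1))·(1 + (p/2)·((1+1/√p)^{-2k}+(1-1/√p)^{-2k})). -/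
theorem local_factor_closed_form (k : ℕ) (hk : 1 ≤ k) (p : ℕ) (hp : p.Prime) :
    ((1 - 1/(p:ℝ)) ^ (2*k^2 + k) * (1/((p:ℝ) + 1)) *
        (1 + ((p:ℝ)/2) * (((1 + 1/Real.sqrt p) ^ (2*k))⁻¹ + ((1 - 1/Real.sqrt p) ^ (2*k))⁻¹))
      = (1 - 1/(p:ℝ)) ^ (2*k^2 + k) * (1 + 1/(p:ℝ))⁻¹
          * ∑' h : ℕ, (Nat.choose (2*h + 2*k - 1) (2*h) : ℝ) * ((p:ℝ)^h)⁻¹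
        + (1 - 1/(p:ℝ)) ^ (2*k^2 + k) * (1 - (1 + 1/(p:ℝ))⁻¹))
    ∧ (1 + (1 + 1/(p:ℝ))⁻¹
          * (-1 + ∑' h : ℕ, (Nat.choose (2*h + 2*k - 1) (2*h) : ℝ) * ((p:ℝ)^h)⁻¹)
      = (1/((p:ℝ) + 1)) *
          (1 + ((p:ℝ)/2) * (((1 + 1/Real.sqrt p) ^ (2*k))⁻¹ + ((1 - 1/Real.sqrt p) ^ (2*k))⁻¹))) := by
  have hp2 : (2:ℝ) ≤ (p:ℝ) := by exact_mod_cast hp.two_le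
  have hp0 : (0:ℝ) < p := by linarith
  have hsp : 1 < Real.sqrt p := by
    rw [show (1:ℝ) = Real.sqrt 1 from (Real.sqrt_one).symm]
    exact Real.sqrt_lt_sqrt (by norm_num) (by linarith)
  set x : ℝ := 1 / Real.sqrt p with hxdef
  have hx0 : 0 < x := by positivity
  have hx1 : x < 1 := by
    rw [hxdef, div_lt_one (by linarith)]; linarith
  have hxn : ‖x‖ < 1 := by rw [Real.norm_eq_abs, abs_of_pos hx0]; exact hx1
  have hxn' : ‖-x‖ < 1 := by rwa [norm_neg]
  have hx2 : x ^ 2 = ((p:ℝ))⁻¹ := by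
    rw [hxdef, div_pow, one_pow, Real.sq_sqrt hp0.le, one_div]
  have h1 := hasSum_choose_mul_geometric_of_norm_lt_one (𝕜 := ℝ) (2*k-1) hxn
  have h2 := hasSum_choose_mul_geometric_of_norm_lt_one (𝕜 := ℝ) (2*k-1) hxn'
  rw [show 2*k-1+1 = 2*k by omega] at h1 h2
  rw [show (1 : ℝ) - -x = 1 + x by ring] at h2
  have hF : HasSum (fun n : ℕ => (((n + (2*k-1)).choose (2*k-1) : ℝ) * x^n
      + ((n + (2*k-1)).choose (2*k-1) : ℝ) * (-x)^n)/2)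
      ((1 / (1-x)^(2*k) + 1 / (1+x)^(2*k))/2) := (h1.add h2).div_const 2
  have hinj : Function.Injective (fun h : ℕ => 2*h) := fun a b hab => by
    dsimp at hab; omega
  have hvan : ∀ n : ℕ, n ∉ Set.range (fun h : ℕ => 2*h) →
      (((n + (2*k-1)).choose (2*k-1) : ℝ) * x^n
      + ((n + (2*k-1)).choose (2*k-1) : ℝ) * (-x)^n)/2 = 0 := by
    intro n hn
    have hodd : Odd n := by
      rcases Nat.even_or_odd n with he | ho
      · obtain ⟨m, hm⟩ := he
        exact absurd (⟨m, by dsimp; omega⟩ : n ∈ Set.range (fun h : ℕ => 2*h)) hn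
      · exact ho
    rw [hodd.neg_pow]
    ring
  have h3 : HasSum (fun h : ℕ => (((2*h + (2*k-1)).choose (2*k-1) : ℝ) * x^(2*h)
      + ((2*h + (2*k-1)).choose (2*k-1) : ℝ) * (-x)^(2*h))/2)
      ((1 / (1-x)^(2*k) + 1 / (1+x)^(2*k))/2) :=
    (Function.Injective.hasSum_iff hinj hvan).2 hF
  have hfun : (fun h : ℕ => (((2*h + (2*k-1)).choose (2*k-1) : ℝ) * x^(2*h)
      + ((2*h + (2*k-1)).choose (2*k-1) : ℝ) * (-x)^(2*h))/2)
      = fun h : ℕ => (Nat.choose (2*h + 2*k - 1) (2*h) : ℝ) * ((p:ℝ)^h)⁻¹ := by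
    funext h
    have he : (-x)^(2*h) = x^(2*h) := (even_two_mul h).neg_pow x
    have hxp : x^(2*h) = ((p:ℝ)^h)⁻¹ := by rw [pow_mul, hx2, inv_pow]
    have hc : (2*h + (2*k-1)).choose (2*k-1) = Nat.choose (2*h + 2*k - 1) (2*h) := by
      rw [show 2*h + (2*k-1) = 2*h+2*k-1 by omega]
      rw [← Nat.choose_symm (by omega : 2*k-1 ≤ 2*h+2*k-1),
        show 2*h+2*k-1 - (2*k-1) = 2*h by omega]
    rw [he, hxp, hc]; ring
  rw [hfun] at h3
  have hS := h3.tsum_eq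
  rw [hS]
  have hps : (p:ℝ) + 1 ≠ 0 := by linarith
  have hpn : (p:ℝ) ≠ 0 := by linarith
  constructor <;> · field_simp; ring
end

section
/- Let 𝔞 = (a₁+a₂i) and 𝔟 = (b₁+b₂i) be nonzero ideals of ℤ[i] with norms at most x, where the generators are chosen in the first quadrant with 0 ≤ arg(a₁+a₂i) ≤ arg(b₁+b₂i) < π/2. Then either (a₁+a₂i)/(b₁+b₂i) ∈ ℚ, or arg(b₁+b₂i) − arg(a₁+a₂i) ≥ arctan(1/x). -/
private lemma gaussian_angle_gap_aux_cs (x A B C D : ℝ)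
    (hNa : A^2 + B^2 ≤ x) (hNb : C^2 + D^2 ≤ x) : (C*A + D*B)^2 ≤ x^2 := by
  nlinarith [sq_nonneg (A*D - B*C), sq_nonneg (A+B), sq_nonneg A, sq_nonneg B,
    sq_nonneg C, sq_nonneg D]

private lemma gaussian_angle_gap_aux_le (x c : ℝ) (hx : 0 < x) (hc : 0 ≤ c)
    (h : c^2 ≤ x^2) : c ≤ x := by nlinarith

theorem gaussian_angle_gap (x : ℝ) (a₁ a₂ b₁ b₂ : ℤ) (α β : ℂ)
    (hα : α = (a₁ : ℂ) + (a₂ : ℂ) * Complex.I)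
    (hβ : β = (b₁ : ℂ) + (b₂ : ℂ) * Complex.I)
    (hα0 : α ≠ 0) (hβ0 : β ≠ 0)
    (hNa : ((a₁ : ℝ) ^ 2 + (a₂ : ℝ) ^ 2) ≤ x)
    (hNb : ((b₁ : ℝ) ^ 2 + (b₂ : ℝ) ^ 2) ≤ x)
    (h1 : 0 ≤ α.arg) (h2 : α.arg ≤ β.arg) (h3 : β.arg < Real.pi / 2) :
    (∃ q : ℚ, α = (q : ℂ) * β) ∨ Real.arctan (1 / x) ≤ β.arg - α.arg := by
  have pi_pos := Real.pi_pos
  have hαre : α.re = (a₁ : ℝ) := by simp [hα]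
  have hαim : α.im = (a₂ : ℝ) := by simp [hα]
  have hβre : β.re = (b₁ : ℝ) := by simp [hβ]
  have hβim : β.im = (b₂ : ℝ) := by simp [hβ]
  have hαarg_lt : α.arg < Real.pi / 2 := lt_of_le_of_lt h2 h3
  have hαre_pos : 0 < α.re := by
    rcases Complex.arg_lt_pi_div_two_iff.mp hαarg_lt with h | h | h
    · exact h
    · exact absurd (Complex.arg_nonneg_iff.mp h1) (not_le.mpr h)
    · exact absurd h hα0
  have hβ1 : 0 ≤ β.arg := le_trans h1 h2
  have hβre_pos : 0 < β.re := by
    rcases Complex.arg_lt_pi_div_two_iff.mp h3 with h | h | h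
    · exact h
    · exact absurd (Complex.arg_nonneg_iff.mp hβ1) (not_le.mpr h)
    · exact absurd h hβ0
  have hαim_nn : 0 ≤ α.im := Complex.arg_nonneg_iff.mp h1
  have hβim_nn : 0 ≤ β.im := Complex.arg_nonneg_iff.mp hβ1
  set z : ℂ := β * (starRingEnd ℂ) α with hz
  have hconj0 : (starRingEnd ℂ) α ≠ 0 := by simpa using hα0
  have hargconj : ((starRingEnd ℂ) α).arg = -α.arg := by
    rw [Complex.arg_conj]
    have : α.arg ≠ Real.pi := by nlinarith [hαarg_lt]
    simp [this]
  have hargz : z.arg = β.arg - α.arg := by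
    have := Complex.arg_mul hβ0 hconj0 (by
      rw [hargconj]
      constructor <;> [nlinarith; nlinarith])
    rw [this, hargconj]; ring
  have hzre : z.re = β.re * α.re + β.im * α.im := by
    simp [hz, Complex.mul_re]
  have hzim : z.im = β.im * α.re - β.re * α.im := by
    simp [hz, Complex.mul_im]; ring
  by_cases hd : β.im * α.re - β.re * α.im = 0
  · -- rational case
    left
    have h' : ¬(b₁ = 0 ∧ b₂ = 0) := by
      rintro ⟨rfl, rfl⟩
      apply hβ0; rw [hβ]; simp
    have hNbpos : (0:ℝ) < (b₁:ℝ)^2 + (b₂:ℝ)^2 := by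
      rcases not_and_or.mp h' with h | h
      · nlinarith [sq_pos_of_ne_zero (show (b₁:ℝ) ≠ 0 by exact_mod_cast h), sq_nonneg (b₂:ℝ)]
      · nlinarith [sq_pos_of_ne_zero (show (b₂:ℝ) ≠ 0 by exact_mod_cast h), sq_nonneg (b₁:ℝ)]
    have hdZ : b₂ * a₁ = b₁ * a₂ := by
      have hd' : (b₂:ℝ) * a₁ - (b₁:ℝ) * a₂ = 0 := by
        rw [hβim, hβre, hαre, hαim] at hd; linarith
      have : (b₂:ℝ) * a₁ = (b₁:ℝ) * a₂ := by linarith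
      exact_mod_cast this
    have hdC : (b₂:ℂ) * a₁ = (b₁:ℂ) * a₂ := by exact_mod_cast hdZ
    have hden : ((b₁:ℂ)^2 + (b₂:ℂ)^2) ≠ 0 := by
      have h2 : ((((b₁:ℝ)^2 + (b₂:ℝ)^2) : ℝ) : ℂ) ≠ 0 :=
        Complex.ofReal_ne_zero.mpr (ne_of_gt hNbpos)
      push_cast at h2
      exact h2
    refine ⟨((a₁*b₁ + a₂*b₂ : ℤ) : ℚ) / ((b₁^2 + b₂^2 : ℤ) : ℚ), ?_⟩
    have hcast : ((((a₁*b₁ + a₂*b₂ : ℤ) : ℚ) / ((b₁^2 + b₂^2 : ℤ) : ℚ) : ℚ) : ℂ)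
        = ((a₁:ℂ)*b₁ + (a₂:ℂ)*b₂) / ((b₁:ℂ)^2 + (b₂:ℂ)^2) := by push_cast; ring
    rw [hcast, hα, hβ, div_mul_eq_mul_div, eq_div_iff hden]
    linear_combination ((b₂:ℂ) - (b₁:ℂ) * Complex.I) * hdC
  · -- angle gap case
    right
    have hx1 : 1 ≤ x := by
      have h' : ¬(a₁ = 0 ∧ a₂ = 0) := by
        rintro ⟨rfl, rfl⟩; apply hα0; rw [hα]; simp
      have : (1:ℤ) ≤ a₁^2 + a₂^2 := by
        rcases not_and_or.mp h' with h | h <;>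
          nlinarith [sq_nonneg a₁, sq_nonneg a₂, Int.one_le_abs h, sq_abs a₁, sq_abs a₂]
      have : (1:ℝ) ≤ (a₁:ℝ)^2 + (a₂:ℝ)^2 := by exact_mod_cast this
      linarith
    have hxpos : 0 < x := by linarith
    have hdnn : 0 ≤ z.im := Complex.arg_nonneg_iff.mp (by rw [hargz]; linarith)
    have hd1 : 1 ≤ z.im := by
      have hzimZ : z.im = ((b₂ * a₁ - b₁ * a₂ : ℤ) : ℝ) := by
        rw [hzim, hβim, hβre, hαre, hαim]; push_cast; ring
      have hne : (b₂ * a₁ - b₁ * a₂ : ℤ) ≠ 0 := by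
        intro h
        apply hd
        rw [hzim] at hzimZ
        rw [hβim, hβre, hαre, hαim]
        have h0 : ((b₂ * a₁ - b₁ * a₂ : ℤ) : ℝ) = 0 := by exact_mod_cast h
        push_cast at h0; linarith
      have : (0:ℤ) ≤ b₂ * a₁ - b₁ * a₂ := by
        have := hdnn; rw [hzimZ] at this; exact_mod_cast this
      have : (1:ℤ) ≤ b₂ * a₁ - b₁ * a₂ := by omega
      rw [hzimZ]; exact_mod_cast this
    have hcpos : 0 < z.re := by
      rw [hzre]
      exact add_pos_of_pos_of_nonneg (mul_pos hβre_pos hαre_pos)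
        (mul_nonneg hβim_nn hαim_nn)
    have hsq : ((b₁:ℝ)*a₁ + (b₂:ℝ)*a₂)^2 ≤ x^2 :=
      gaussian_angle_gap_aux_cs x _ _ _ _ hNa hNb
    have hcx : z.re ≤ x := by
      have hc0 : 0 ≤ z.re := le_of_lt hcpos
      rw [hzre, hβre, hβim, hαre, hαim] at hc0 ⊢
      exact gaussian_angle_gap_aux_le x _ hxpos hc0 hsq
    have htan : 1 / x ≤ z.im / z.re := by
      rw [div_le_div_iff₀ hxpos hcpos]
      have h1 : (1:ℝ) * x ≤ z.im * x := mul_le_mul_of_nonneg_right hd1 (le_of_lt hxpos)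
      linarith
    have hzarg_lt : z.arg < Real.pi / 2 := by rw [hargz]; linarith
    have hzarg_gt : -(Real.pi / 2) < z.arg := by rw [hargz]; linarith
    calc Real.arctan (1 / x) ≤ Real.arctan (z.im / z.re) :=
          Real.arctan_strictMono.monotone htan
      _ = Real.arctan (Real.tan z.arg) := by rw [Complex.tan_arg]
      _ = z.arg := Real.arctan_tan hzarg_gt hzarg_lt
      _ = β.arg - α.arg := hargz
end

section
/- For any positive integers ℓ and any x ≥ 2, ∑_{𝔞 ideal of ℤ[i], N(𝔞) ≤ x} d_ℓ(𝔞) ≪_ℓ x·(log x)^{ℓ-1}, where d_ℓ(𝔞) is the number of ways to write the ideal 𝔞 as an ordered product of ℓ ideals. -/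
open scoped GaussianInt

/-- The norm of an ideal of `ℤ[i]`: the cardinality of the quotient ring. -/
noncomputable def idealNorm (𝔞 : Ideal GaussianInt) : ℕ :=
  Nat.card (GaussianInt ⧸ 𝔞)

/-- The `ℓ`-fold divisor function on ideals: the number of ways of writing the ideal `𝔞`
as an ordered product of `ℓ` ideals. -/
noncomputable def dfoldIdeal (ℓ : ℕ) (𝔞 : Ideal GaussianInt) : ℕ :=
  Nat.card {f : Fin ℓ → Ideal GaussianInt // ∏ i, f i = 𝔞}

/-!
An `ℓ`-tuple of ideals whose product has norm at most `n` consists of an ideal `𝔟` of norm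
at most `n` followed by an `(ℓ - 1)`-tuple whose product has norm at most `n / N(𝔟)`. Since `ℤ[i]`
is a principal ideal domain, the nonzero ideals of norm at most `n` are generated by lattice
points in a square of side `2√n + 1`, so there are at most `9n` of them; a dyadic decomposition
then gives `∑_{N(𝔟) ≤ n} 1 / N(𝔟) ≪ 1 + log n`, and induction on `ℓ` bounds the number of
such tuples by `≪ n (1 + log n)^(ℓ - 1)`. The sum of `d_ℓ` over ideals of norm at most `x`
counts exactly these tuples for `n = ⌊x⌋`.
-/

open Finset

theorem Real.log_natCast_monotone : Monotone fun n : ℕ => Real.log n := by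
  intro m n hmn
  rcases Nat.eq_zero_or_pos m with rfl | hm
  · simpa using Real.log_natCast_nonneg n
  · exact Real.log_le_log (by exact_mod_cast hm) (by exact_mod_cast hmn)

theorem natLog_two_le_two_mul_log (n : ℕ) : (Nat.log 2 n : ℝ) ≤ 2 * Real.log n := by
  have hlog2 : (1 / 2 : ℝ) < Real.log 2 := by linarith [Real.log_two_gt_d9]
  have hlogb : (Nat.log 2 n : ℝ) ≤ Real.log n / Real.log 2 := by
    simpa [Real.logb] using Real.natLog_le_logb n 2
  rw [le_div_iff₀ (by linarith)] at hlogb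
  nlinarith [Real.log_natCast_nonneg n, Nat.cast_nonneg (α := ℝ) (Nat.log 2 n)]

section Dyadic

variable {ι : Type*} (s : Finset ι) (w : ι → ℕ) (c : ℕ)

theorem sum_inv_filter_natLog_eq_le (hpos : ∀ i ∈ s, 0 < w i)
    (hcard : ∀ m, #{i ∈ s | w i ≤ m} ≤ c * m) (j : ℕ) :
    ∑ i ∈ s with Nat.log 2 (w i) = j, (w i : ℝ)⁻¹ ≤ 2 * c := by
  set t := {i ∈ s | Nat.log 2 (w i) = j}
  have ht : #t ≤ c * 2 ^ (j + 1) := by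
    refine (card_le_card fun i hi => ?_).trans (hcard _)
    simp only [t, mem_filter] at hi ⊢
    refine ⟨hi.1, ?_⟩
    have := Nat.lt_pow_succ_log_self one_lt_two (w i)
    rw [hi.2] at this
    exact this.le
  have hterm : ∀ i ∈ t, (w i : ℝ)⁻¹ ≤ (2 ^ j : ℝ)⁻¹ := by
    intro i hi
    simp only [t, mem_filter] at hi
    have := Nat.pow_log_le_self 2 (hpos i hi.1).ne'
    rw [hi.2] at this
    gcongr
    exact_mod_cast this
  calc ∑ i ∈ t, (w i : ℝ)⁻¹ ≤ #t * (2 ^ j : ℝ)⁻¹ := by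
        simpa using sum_le_card_nsmul t _ _ hterm
    _ ≤ (c * 2 ^ (j + 1) : ℕ) * (2 ^ j : ℝ)⁻¹ := by gcongr
    _ = 2 * c := by push_cast; field_simp; ring

theorem sum_inv_le_of_card_filter_le (n : ℕ) (hpos : ∀ i ∈ s, 0 < w i) (hle : ∀ i ∈ s, w i ≤ n)
    (hcard : ∀ m, #{i ∈ s | w i ≤ m} ≤ c * m) :
    ∑ i ∈ s, (w i : ℝ)⁻¹ ≤ 4 * c * (1 + Real.log n) := by
  have hmaps : ∀ i ∈ s, Nat.log 2 (w i) ∈ range (Nat.log 2 n + 1) := fun i hi =>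
    mem_range_succ_iff.mpr (Nat.log_mono_right (hle i hi))
  calc ∑ i ∈ s, (w i : ℝ)⁻¹
      = ∑ j ∈ range (Nat.log 2 n + 1), ∑ i ∈ s with Nat.log 2 (w i) = j, (w i : ℝ)⁻¹ :=
        (sum_fiberwise_of_maps_to hmaps _).symm
    _ ≤ ∑ j ∈ range (Nat.log 2 n + 1), (2 * c : ℝ) :=
        sum_le_sum fun j _ => sum_inv_filter_natLog_eq_le s w c hpos hcard j
    _ = 2 * c * (Nat.log 2 n + 1) := by simp; ring
    _ ≤ 4 * c * (1 + Real.log n) := by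
        nlinarith [natLog_two_le_two_mul_log n, Real.log_natCast_nonneg n,
          Nat.cast_nonneg (α := ℝ) c]

end Dyadic

section IdealCounting

variable (S : Type*) [CommRing S] [IsDedekindDomain S] [Module.Free ℤ S] [Module.Finite ℤ S]
  [CharZero S]

noncomputable def idealsNormLe (n : ℕ) : Finset (Ideal S) :=
  {I ∈ (Ideal.finite_setOfPred_absNorm_le n).toFinset | 0 < Ideal.absNorm I}

noncomputable def tuplesNormLe (ℓ n : ℕ) : Finset (Fin ℓ → Ideal S) :=
  {f ∈ Fintype.piFinset fun _ => idealsNormLe S n | Ideal.absNorm (∏ i, f i) ≤ n}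

variable {S}

theorem mem_idealsNormLe {n : ℕ} {I : Ideal S} :
    I ∈ idealsNormLe S n ↔ 0 < Ideal.absNorm I ∧ Ideal.absNorm I ≤ n := by
  simp [idealsNormLe, and_comm]

theorem mem_idealsNormLe_of_dvd {n : ℕ} {I J : Ideal S} (hJI : J ∣ I)
    (hI : I ∈ idealsNormLe S n) : J ∈ idealsNormLe S n := by
  rw [mem_idealsNormLe] at hI ⊢
  have hdvd := map_dvd Ideal.absNorm hJI
  exact ⟨Nat.pos_of_dvd_of_pos hdvd hI.1, (Nat.le_of_dvd hI.1 hdvd).trans hI.2⟩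

theorem mem_tuplesNormLe {ℓ n : ℕ} {f : Fin ℓ → Ideal S} :
    f ∈ tuplesNormLe S ℓ n ↔ ∏ i, f i ∈ idealsNormLe S n := by
  simp only [tuplesNormLe, mem_filter, Fintype.mem_piFinset, mem_idealsNormLe (I := ∏ i, f i)]
  constructor
  · rintro ⟨hf, hle⟩
    refine ⟨?_, hle⟩
    rw [map_prod]
    exact prod_pos fun i _ => (mem_idealsNormLe.mp (hf i)).1
  · intro h
    exact ⟨fun i => mem_idealsNormLe_of_dvd (dvd_prod_of_mem f (mem_univ i))
      (mem_idealsNormLe.mpr h), h.2⟩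

theorem card_tuplesNormLe_zero_le (n : ℕ) : #(tuplesNormLe S 0 n) ≤ min 1 n := by
  rcases n.eq_zero_or_pos with rfl | hn
  · simp [eq_empty_iff_forall_notMem, mem_tuplesNormLe, mem_idealsNormLe]
  · simpa [Nat.one_le_iff_ne_zero.mpr hn.ne'] using card_le_one_of_subsingleton _

theorem card_tuplesNormLe_succ_le (ℓ n : ℕ) :
    #(tuplesNormLe S (ℓ + 1) n) ≤
      ∑ J ∈ idealsNormLe S n, #(tuplesNormLe S ℓ (n / Ideal.absNorm J)) := by
  rw [← card_sigma]
  refine card_le_card_of_injOn (fun f => ⟨f 0, Fin.tail f⟩) (fun f hf => ?_)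
    (fun f _ g _ h => ?_)
  · rw [mem_coe, mem_tuplesNormLe, Fin.prod_univ_succ, mem_idealsNormLe, map_mul] at hf
    obtain ⟨hpos, hle⟩ := hf
    have hhead : 0 < Ideal.absNorm (f 0) := pos_of_mul_pos_left hpos (Nat.zero_le _)
    have htail := pos_of_mul_pos_right hpos (Nat.zero_le _)
    simp only [coe_sigma, Set.mem_sigma_iff, mem_coe, mem_idealsNormLe, mem_tuplesNormLe]
    refine ⟨⟨hhead, (Nat.le_mul_of_pos_right _ htail).trans hle⟩, htail, ?_⟩
    rwa [Nat.le_div_iff_mul_le hhead, mul_comm]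
  · simp only [Sigma.mk.inj_iff] at h
    rw [← Fin.cons_self_tail f, ← Fin.cons_self_tail g, h.1, eq_of_heq h.2]

theorem sum_inv_absNorm_le {c : ℕ} (hcount : ∀ n, #(idealsNormLe S n) ≤ c * n) (n : ℕ) :
    ∑ J ∈ idealsNormLe S n, (Ideal.absNorm J : ℝ)⁻¹ ≤ 4 * c * (1 + Real.log n) := by
  refine sum_inv_le_of_card_filter_le _ _ c n (fun J hJ => (mem_idealsNormLe.mp hJ).1)
    (fun J hJ => (mem_idealsNormLe.mp hJ).2) fun m => (card_le_card fun J hJ => ?_).trans (hcount m)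
  simp only [mem_filter, mem_idealsNormLe] at hJ ⊢
  exact ⟨hJ.1.1, hJ.2⟩

theorem card_tuplesNormLe_succ_le_mul {c : ℕ} (hcount : ∀ n, #(idealsNormLe S n) ≤ c * n)
    (ℓ n : ℕ) :
    (#(tuplesNormLe S (ℓ + 1) n) : ℝ) ≤ c * (4 * c) ^ ℓ * n * (1 + Real.log n) ^ ℓ := by
  induction ℓ generalizing n with
  | zero =>
    have := (card_tuplesNormLe_succ_le (S := S) 0 n).trans
      (sum_le_card_nsmul _ _ 1 fun J _ => (card_tuplesNormLe_zero_le _).trans (min_le_left _ _))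
    simp only [pow_zero, mul_one]
    exact_mod_cast this.trans (by simpa using hcount n)
  | succ ℓ ih =>
    have hterm : ∀ J ∈ idealsNormLe S n,
        (#(tuplesNormLe S (ℓ + 1) (n / Ideal.absNorm J)) : ℝ) ≤
          c * (4 * c) ^ ℓ * n * (1 + Real.log n) ^ ℓ * (Ideal.absNorm J : ℝ)⁻¹ := by
      intro J _
      calc _ ≤ c * (4 * c) ^ ℓ * ↑(n / Ideal.absNorm J) *
              (1 + Real.log ↑(n / Ideal.absNorm J)) ^ ℓ := ih _
        _ ≤ c * (4 * c) ^ ℓ * (n / Ideal.absNorm J) * (1 + Real.log n) ^ ℓ := by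
            have hlog := Real.log_natCast_monotone (Nat.div_le_self n (Ideal.absNorm J))
            gcongr
            exact Nat.cast_div_le
        _ = _ := by ring
    calc (#(tuplesNormLe S (ℓ + 1 + 1) n) : ℝ)
        ≤ ∑ J ∈ idealsNormLe S n, (#(tuplesNormLe S (ℓ + 1) (n / Ideal.absNorm J)) : ℝ) := by
          exact_mod_cast card_tuplesNormLe_succ_le (ℓ + 1) n
      _ ≤ c * (4 * c) ^ ℓ * n * (1 + Real.log n) ^ ℓ *
            ∑ J ∈ idealsNormLe S n, (Ideal.absNorm J : ℝ)⁻¹ := by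
          rw [mul_sum]
          exact sum_le_sum hterm
      _ ≤ c * (4 * c) ^ ℓ * n * (1 + Real.log n) ^ ℓ * (4 * c * (1 + Real.log n)) := by
          gcongr
          exact sum_inv_absNorm_le hcount n
      _ = c * (4 * c) ^ (ℓ + 1) * n * (1 + Real.log n) ^ (ℓ + 1) := by ring

theorem sum_card_factorizations_eq_card_tuplesNormLe (ℓ n : ℕ) :
    ∑ I ∈ idealsNormLe S n, Nat.card {f : Fin ℓ → Ideal S // ∏ i, f i = I} =
      #(tuplesNormLe S ℓ n) := by
  classical
  rw [card_eq_sum_card_fiberwise fun f hf => mem_tuplesNormLe.mp hf]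
  refine sum_congr rfl fun I hI => ?_
  rw [← Nat.card_eq_finsetCard]
  exact Nat.card_congr (Equiv.subtypeEquivRight fun f => by
    simp only [mem_filter, mem_tuplesNormLe]
    exact ⟨fun h => ⟨h ▸ hI, h⟩, And.right⟩)

end IdealCounting

namespace GaussianInt

def equivFinTwo : GaussianInt ≃ₗ[ℤ] (Fin 2 → ℤ) where
  toFun z := ![z.re, z.im]
  invFun v := ⟨v 0, v 1⟩
  map_add' z w := by funext j; fin_cases j <;> simp
  map_smul' n z := by funext j; fin_cases j <;> simp [zsmul_eq_mul]
  left_inv z := by simp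
  right_inv v := by funext j; fin_cases j <;> simp

noncomputable def basis : Module.Basis (Fin 2) ℤ GaussianInt :=
  .ofEquivFun equivFinTwo

instance : Module.Free ℤ GaussianInt := .of_basis basis

instance : Module.Finite ℤ GaussianInt := .of_basis basis

theorem algebraNorm_eq_norm (z : GaussianInt) : Algebra.norm ℤ z = z.norm := by
  rw [Algebra.norm_eq_matrix_det basis, Matrix.det_fin_two]
  simp only [Algebra.leftMulMatrix_eq_repr_mul, basis, Module.Basis.ofEquivFun_repr_apply,
    Module.Basis.coe_ofEquivFun, equivFinTwo, LinearEquiv.coe_mk, LinearEquiv.coe_symm_mk,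
    Zsqrtd.norm]
  simp [Zsqrtd.re_mul, Zsqrtd.im_mul]

theorem idealNorm_eq_absNorm (I : Ideal GaussianInt) : idealNorm I = Ideal.absNorm I := by
  rw [Ideal.absNorm_apply, Submodule.cardQuot_apply]
  rfl

theorem natAbs_le_sqrt_of_norm_le {z : GaussianInt} {n : ℕ} (hz : z.norm ≤ n) :
    z.re.natAbs ≤ n.sqrt ∧ z.im.natAbs ≤ n.sqrt := by
  rw [Zsqrtd.norm_def] at hz
  constructor <;> refine Nat.le_sqrt.mpr ?_ <;> zify <;> simp only [sq_abs, ← sq] <;>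
    nlinarith [sq_nonneg z.re, sq_nonneg z.im]

theorem card_idealsNormLe_le (n : ℕ) : #(idealsNormLe GaussianInt n) ≤ 9 * n := by
  rcases n.eq_zero_or_pos with rfl | hn
  · simp [eq_empty_iff_forall_notMem, mem_idealsNormLe, pos_iff_ne_zero]
  set s := n.sqrt
  have hsub : idealsNormLe GaussianInt n ⊆
      (Icc (-s : ℤ) s ×ˢ Icc (-s : ℤ) s).image fun p => Ideal.span {⟨p.1, p.2⟩} := by
    intro I hI
    obtain ⟨z, rfl⟩ : ∃ z, Ideal.span {z} = I := ⟨_, Ideal.span_singleton_generator I⟩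
    rw [mem_idealsNormLe, Ideal.absNorm_span_singleton, algebraNorm_eq_norm] at hI
    have hz := natAbs_le_sqrt_of_norm_le (z := z) (n := n)
      (by have := Zsqrtd.norm_nonneg (by norm_num) z; omega)
    simp only [mem_image, mem_product, mem_Icc]
    exact ⟨(z.re, z.im), by omega, rfl⟩
  calc #(idealsNormLe GaussianInt n) ≤ #(Icc (-s : ℤ) s ×ˢ Icc (-s : ℤ) s) :=
        (card_le_card hsub).trans card_image_le
    _ = (2 * s + 1) ^ 2 := by
        rw [card_product, Int.card_Icc, sq, show ((s : ℤ) + 1 - -s).toNat = 2 * s + 1 by omega]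
    _ ≤ 9 * n := by nlinarith [Nat.sqrt_le' n, Nat.sqrt_pos.mpr hn]

theorem card_tuplesNormLe_le (ℓ n : ℕ) :
    (#(tuplesNormLe GaussianInt ℓ n) : ℝ) ≤
      9 * 36 ^ (ℓ - 1) * n * (1 + Real.log n) ^ (ℓ - 1) := by
  cases ℓ with
  | zero =>
    have := (card_tuplesNormLe_zero_le (S := GaussianInt) n).trans (min_le_right _ _)
    simp only [zero_tsub, pow_zero, mul_one]
    exact_mod_cast this.trans (Nat.le_mul_of_pos_left n (by norm_num))
  | succ ℓ =>
    simpa [show (4 : ℝ) * 9 = 36 by norm_num] using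
      card_tuplesNormLe_succ_le_mul card_idealsNormLe_le ℓ n

theorem tsum_ite_idealNorm_le_eq_sum (g : Ideal GaussianInt → ℝ) {x : ℝ} (hx : 0 ≤ x) :
    (∑' I, if 1 ≤ idealNorm I ∧ (idealNorm I : ℝ) ≤ x then g I else 0) =
      ∑ I ∈ idealsNormLe GaussianInt ⌊x⌋₊, g I := by
  have hmem (I : Ideal GaussianInt) :
      (1 ≤ idealNorm I ∧ (idealNorm I : ℝ) ≤ x) ↔ I ∈ idealsNormLe GaussianInt ⌊x⌋₊ := by
    rw [mem_idealsNormLe, idealNorm_eq_absNorm, Nat.le_floor_iff hx, Nat.one_le_iff_ne_zero,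
      Nat.pos_iff_ne_zero]
  simp_rw [hmem]
  rw [tsum_eq_sum fun I hI => if_neg hI]
  exact sum_congr rfl fun I hI => if_pos hI

end GaussianInt

theorem divisor_ideal_sum_bound_general (ℓ : ℕ) :
    ∃ C : ℝ, 0 < C ∧ ∀ x : ℝ, 2 ≤ x →
      (∑' 𝔞 : Ideal GaussianInt,
          if 1 ≤ idealNorm 𝔞 ∧ (idealNorm 𝔞 : ℝ) ≤ x then (dfoldIdeal ℓ 𝔞 : ℝ) else 0)
        ≤ C * x * Real.log x ^ (ℓ - 1) := by
  refine ⟨9 * 36 ^ (ℓ - 1) * 3 ^ (ℓ - 1), by positivity, fun x hx => ?_⟩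
  set n := ⌊x⌋₊
  have hnx : (n : ℝ) ≤ x := Nat.floor_le (by linarith)
  have hlog : 1 + Real.log n ≤ 3 * Real.log x := by
    have hn : (0 : ℝ) < n := by exact_mod_cast Nat.floor_pos.mpr (by linarith)
    have hlog2 : Real.log 2 ≤ Real.log x := Real.log_le_log two_pos hx
    linarith [Real.log_le_log hn hnx, Real.log_two_gt_d9]
  rw [GaussianInt.tsum_ite_idealNorm_le_eq_sum _ (by linarith)]
  calc ∑ I ∈ idealsNormLe GaussianInt n, (dfoldIdeal ℓ I : ℝ)
      = #(tuplesNormLe GaussianInt ℓ n) := by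
        exact_mod_cast sum_card_factorizations_eq_card_tuplesNormLe ℓ n
    _ ≤ 9 * 36 ^ (ℓ - 1) * n * (1 + Real.log n) ^ (ℓ - 1) :=
        GaussianInt.card_tuplesNormLe_le ℓ n
    _ ≤ 9 * 36 ^ (ℓ - 1) * x * (3 * Real.log x) ^ (ℓ - 1) := by
        gcongr
    _ = 9 * 36 ^ (ℓ - 1) * 3 ^ (ℓ - 1) * x * Real.log x ^ (ℓ - 1) := by ring

theorem divisor_ideal_sum_bound (ℓ : ℕ) (hℓ : 1 ≤ ℓ) :
    ∃ C : ℝ, 0 < C ∧ ∀ x : ℝ, 2 ≤ x →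
      (∑' 𝔞 : Ideal GaussianInt,
          if 1 ≤ idealNorm 𝔞 ∧ (idealNorm 𝔞 : ℝ) ≤ x then (dfoldIdeal ℓ 𝔞 : ℝ) else 0)
        ≤ C * x * Real.log x ^ (ℓ - 1) :=
  divisor_ideal_sum_bound_general ℓ
end
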